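/- arXiv:1305.3324 — 6 statements merged into one kernel-verified Lean document; each statement's English description precedes it below -/
import Mathlib

section
/- Let A be a commutative semisimple complex Banach algebra with unit and let x ∈ A have finite spectrum σ(x) = {λ₁, λ₂, …, λₙ} with the λᵢ pairwise distinct; put δ = min_{i≠j} |λᵢ − λⱼ|. Then there exist orthogonal idempotents x₁, …, xₙ ∈ A (i.e. xᵢ² = xᵢ and xᵢxⱼ = 0 for i ≠ j) such that x = λ₁x₁ + λ₂x₂ + … + λₙxₙ, and moreover ‖xᵢ‖ ≤ δ^{−n+1} 2^{n−1} ‖x‖^{n−1} for each i = 1, …, n. -/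
/-!
The idempotents are the Lagrange basis polynomials `Lᵢ(z) = ∏_{j ≠ i} (z - λⱼ) / (λᵢ - λⱼ)`
evaluated at `x`. Every character `φ` sends `x` into `σ(x) = {λ₁, …, λₙ}` and polynomials in `x`
to the same polynomials evaluated at `φ x`, so two polynomials in `x` agreeing on `σ(x)` are
equal, the Gelfand transform being injective. The identities `Lᵢ² = Lᵢ`, `LᵢLⱼ = 0` and
`∑ λᵢLᵢ = z` hold at the nodes, hence in `A` at `x`. Each of the `n - 1` factors of `Lᵢ(x)`
has norm at most `δ⁻¹ (‖x‖ + |λⱼ|) ≤ δ⁻¹ · 2‖x‖`.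
-/

open Polynomial Lagrange Finset WeakDual

section Semisimple

variable {A : Type*} [NormedCommRing A] [NormedAlgebra ℂ A] [CompleteSpace A]

theorem eq_of_forall_character_apply_eq (hA : (⊥ : Ideal A).jacobson = ⊥) {a b : A}
    (h : ∀ φ : characterSpace ℂ A, φ a = φ b) : a = b := by
  rw [← sub_eq_zero, ← Ideal.mem_bot, ← hA, Ideal.mem_jacobson_bot]
  intro y
  by_contra hy
  obtain ⟨φ, hφ⟩ := CharacterSpace.exists_apply_eq_zero hy
  simp [h φ] at hφ

theorem aeval_eq_of_eval_eq_on_spectrum (hA : (⊥ : Ideal A).jacobson = ⊥) (x : A)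
    {p q : ℂ[X]} (h : ∀ z ∈ spectrum ℂ x, p.eval z = q.eval z) : aeval x p = aeval x q :=
  eq_of_forall_character_apply_eq hA fun φ => by
    simpa only [← aeval_algHom_apply, coe_aeval_eq_eval] using
      h (φ x) (AlgHom.apply_mem_spectrum φ x)

end Semisimple

theorem Lagrange.eval_basis_univ {F ι : Type*} [Field F] [Fintype ι] [DecidableEq ι]
    {v : ι → F} (hv : Function.Injective v) (i k : ι) :
    (Lagrange.basis univ v i).eval (v k) = if k = i then 1 else 0 := by
  split_ifs with hki
  · exact hki ▸ eval_basis_self hv.injOn (mem_univ k)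
  · exact eval_basis_of_ne (Ne.symm hki) (mem_univ k)

section Norm

variable {𝕜 A : Type*} [NormedField 𝕜] [NormedCommRing A] [NormedAlgebra 𝕜 A] [NormOneClass A]

theorem norm_aeval_basisDivisor_le (x : A) (a b : 𝕜) :
    ‖aeval x (basisDivisor a b)‖ ≤ ‖a - b‖⁻¹ * (‖x‖ + ‖b‖) := by
  rw [basisDivisor, map_mul, aeval_C, map_sub, aeval_X, aeval_C]
  calc ‖algebraMap 𝕜 A (a - b)⁻¹ * (x - algebraMap 𝕜 A b)‖
      ≤ ‖algebraMap 𝕜 A (a - b)⁻¹‖ * ‖x - algebraMap 𝕜 A b‖ := norm_mul_le _ _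
    _ ≤ ‖a - b‖⁻¹ * (‖x‖ + ‖b‖) := by
      rw [norm_algebraMap', norm_inv]
      gcongr
      exact (norm_sub_le _ _).trans_eq (by rw [norm_algebraMap'])

theorem norm_aeval_basis_le {ι : Type*} [DecidableEq ι] (x : A) (s : Finset ι) (v : ι → 𝕜)
    (i : ι) : ‖aeval x (Lagrange.basis s v i)‖ ≤ ∏ j ∈ s.erase i, ‖v i - v j‖⁻¹ * (‖x‖ + ‖v j‖) := by
  rw [Lagrange.basis, map_prod]
  exact (Finset.norm_prod_le _ _).trans
    (prod_le_prod (fun _ _ => norm_nonneg _) fun j _ => norm_aeval_basisDivisor_le x _ _)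

theorem norm_aeval_basis_univ_le_pow {ι : Type*} [Fintype ι] [DecidableEq ι] (x : A)
    {v : ι → 𝕜} (i : ι) {c : ℝ} (hsep : ∀ j ≠ i, ‖v i - v j‖⁻¹ ≤ c) (hv : ∀ j, ‖v j‖ ≤ ‖x‖) :
    ‖aeval x (Lagrange.basis univ v i)‖ ≤ (c * (2 * ‖x‖)) ^ (Fintype.card ι - 1) := by
  have hfactor : ∀ j ∈ univ.erase i, ‖v i - v j‖⁻¹ * (‖x‖ + ‖v j‖) ≤ c * (2 * ‖x‖) := by
    intro j hj
    have hji := ne_of_mem_erase hj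
    have hc : 0 ≤ c := (inv_nonneg.2 (norm_nonneg _)).trans (hsep j hji)
    exact mul_le_mul (hsep j hji) (by linarith [hv j]) (by positivity) hc
  calc ‖aeval x (Lagrange.basis univ v i)‖
      ≤ ∏ j ∈ univ.erase i, ‖v i - v j‖⁻¹ * (‖x‖ + ‖v j‖) := norm_aeval_basis_le x univ v i
    _ ≤ ∏ _j ∈ univ.erase i, c * (2 * ‖x‖) := prod_le_prod (fun _ _ => by positivity) hfactor
    _ = (c * (2 * ‖x‖)) ^ (Fintype.card ι - 1) := by
      rw [prod_const, card_erase_of_mem (mem_univ i), card_univ]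

end Norm

theorem sInf_pairwise_dist_le {ι α : Type*} [PseudoMetricSpace α] (f : ι → α) {i j : ι}
    (hij : i ≠ j) : sInf {d : ℝ | ∃ i j, i ≠ j ∧ d = dist (f i) (f j)} ≤ dist (f i) (f j) :=
  csInf_le ⟨0, by rintro _ ⟨_, _, _, rfl⟩; exact dist_nonneg⟩ ⟨i, j, hij, rfl⟩

theorem sInf_pairwise_dist_pos {ι α : Type*} [Finite ι] [MetricSpace α] {f : ι → α}
    (hf : Function.Injective f) {i j : ι} (hij : i ≠ j) :
    0 < sInf {d : ℝ | ∃ i j, i ≠ j ∧ d = dist (f i) (f j)} := by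
  set S := {d : ℝ | ∃ i j, i ≠ j ∧ d = dist (f i) (f j)}
  have hfin : S.Finite :=
    (Set.finite_range fun p : ι × ι => dist (f p.1) (f p.2)).subset
      (by rintro _ ⟨a, b, -, rfl⟩; exact ⟨(a, b), rfl⟩)
  have hne : S.Nonempty := ⟨dist (f i) (f j), i, j, hij, rfl⟩
  obtain ⟨a, b, hab, hmin⟩ := hne.csInf_mem hfin
  exact hmin ▸ dist_pos.2 (hf.ne hab)

/-- **Proposition 10.** Let `A` be a commutative semisimple complex Banach algebra with unit and
let `x ∈ A` have finite spectrum `σ(x) = {λ₁, …, λₙ}` (the `λᵢ` pairwise distinct); put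
`δ = min_{i ≠ j} |λᵢ − λⱼ|`. Then there exist orthogonal idempotents `x₁, …, xₙ ∈ A` with
`x = λ₁x₁ + … + λₙxₙ` and `‖xᵢ‖ ≤ δ^{-n+1} 2^{n-1} ‖x‖^{n-1}` for each `i`. -/
theorem exists_orthogonal_idempotents_of_finite_spectrum
    (A : Type*) [NormedCommRing A] [NormOneClass A] [NormedAlgebra ℂ A] [CompleteSpace A]
    (hsemisimple : (⊥ : Ideal A).jacobson = ⊥)
    (x : A) (n : ℕ) (lam : Fin n → ℂ) (hinj : Function.Injective lam)
    (hspec : spectrum ℂ x = Set.range lam)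
    (δ : ℝ) (hδ : δ = sInf {d : ℝ | ∃ i j, i ≠ j ∧ d = dist (lam i) (lam j)}) :
    ∃ e : Fin n → A,
      (∀ i, e i * e i = e i) ∧
      (∀ i j, i ≠ j → e i * e j = 0) ∧
      x = ∑ i, lam i • e i ∧
      ∀ i, ‖e i‖ ≤ δ⁻¹ ^ (n - 1) * 2 ^ (n - 1) * ‖x‖ ^ (n - 1) := by
  have eq_of_eval_eq_at_nodes : ∀ p q : ℂ[X], (∀ k, p.eval (lam k) = q.eval (lam k)) →
      aeval x p = aeval x q := fun p q h =>
    aeval_eq_of_eval_eq_on_spectrum hsemisimple x (by rw [hspec]; rintro _ ⟨k, rfl⟩; exact h k)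
  refine ⟨fun i => aeval x (Lagrange.basis univ lam i), fun i => ?_, fun i j hij => ?_, ?_,
    fun i => ?_⟩
  · rw [← map_mul]
    refine eq_of_eval_eq_at_nodes _ _ fun k => ?_
    rw [eval_mul, eval_basis_univ hinj]
    split_ifs <;> simp
  · rw [← map_mul, ← map_zero (aeval (R := ℂ) x)]
    refine eq_of_eval_eq_at_nodes _ _ fun k => ?_
    rw [eval_mul, eval_basis_univ hinj, eval_basis_univ hinj]
    split_ifs with hki hkj <;> simp_all
  · calc x = aeval x (X : ℂ[X]) := (aeval_X x).symm
      _ = aeval x (interpolate univ lam lam) :=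
        eq_of_eval_eq_at_nodes _ _ fun k => by
          rw [eval_X, eval_interpolate_at_node _ hinj.injOn (mem_univ k)]
      _ = ∑ i, lam i • aeval x (Lagrange.basis univ lam i) := by
        simp [interpolate_apply, Algebra.smul_def]
  · have hsep : ∀ j ≠ i, ‖lam i - lam j‖⁻¹ ≤ δ⁻¹ := fun j (hji : j ≠ i) => by
      rw [hδ, ← dist_eq_norm]
      exact inv_anti₀ (sInf_pairwise_dist_pos hinj hji.symm) (sInf_pairwise_dist_le lam hji.symm)
    have hnorm : ∀ j, ‖lam j‖ ≤ ‖x‖ := fun j =>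
      spectrum.norm_le_norm_of_mem (by rw [hspec]; exact Set.mem_range_self j)
    calc _ ≤ (δ⁻¹ * (2 * ‖x‖)) ^ (Fintype.card (Fin n) - 1) :=
          norm_aeval_basis_univ_le_pow x i hsep hnorm
      _ = δ⁻¹ ^ (n - 1) * 2 ^ (n - 1) * ‖x‖ ^ (n - 1) := by rw [Fintype.card_fin]; ring
end

section
/- Let f be a trigonometric polynomial on 𝕋 whose set of Fourier coefficient values is {f̂(n) : n ∈ ℤ} = {0, λ₁, λ₂, …, λ_k} with 0, λ₁, …, λ_k pairwise distinct. Put λ₀ = 0, δ = min_{0 ≤ i < j ≤ k} |λᵢ − λⱼ|, and λ_max = max_{0 ≤ i ≤ k} |λᵢ|. Then for every m ∈ ℕ the m-th convolution power of f satisfies ‖f^{*m}‖_{L¹(𝕋)} ≤ k δ^{−k} 2^{k} ‖f‖_{L¹(𝕋)}^{k} λ_max^{m}. -/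
open MeasureTheory Filter Complex Set AddCircle
open scoped Pointwise Classical Real

noncomputable section

instance fact_two_pi_pos : Fact (0 < 2 * Real.pi) := ⟨by positivity⟩

/-- The circle group `𝕋 = ℝ/2πℤ`. -/
abbrev Circ := AddCircle (2 * Real.pi)

/-- The trigonometric polynomial with finitely supported Fourier coefficients `c`. -/
def trig (c : ℤ →₀ ℂ) : C(Circ, ℂ) := ∑ n ∈ c.support, c n • fourier n

/-- The `L¹(𝕋)` norm of the trigonometric polynomial with coefficients `c`
(with respect to the normalized Haar measure on `𝕋`). -/
def trigL1 (c : ℤ →₀ ℂ) : ℝ := ∫ x, ‖trig c x‖ ∂(haarAddCircle : Measure Circ)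

/-- The `m`-th convolution power (`m ≥ 1`) of the trigonometric polynomial with coefficients
`c` is the trigonometric polynomial with Fourier coefficients `(c n)^m`. -/
def trigPow (c : ℤ →₀ ℂ) (m : ℕ) : C(Circ, ℂ) := ∑ n ∈ c.support, (c n ^ m) • fourier n

/-- The `L¹(𝕋)` norm of the `m`-th convolution power of the trigonometric polynomial `c`. -/
def trigPowL1 (c : ℤ →₀ ℂ) (m : ℕ) : ℝ :=
  ∫ x, ‖trigPow c m x‖ ∂(haarAddCircle : Measure Circ)

/-!
Let `S` be the support of `f̂`. On `S` the indicator of the level set `{f̂ = λᵢ}` is the Lagrange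
basis polynomial `∏_{j ≠ i} (f̂ - λⱼ) / (λᵢ - λⱼ)` evaluated at `f̂`, so `f^{*m} = ∑_{i ≠ 0} λᵢ^m Pᵢ`
with `Pᵢ` the trigonometric polynomial having these coefficients on `S`; pointwise products of
coefficients are convolutions. By Young's inequality `‖g ∗ h‖₁ ≤ ‖g‖₁ ‖h‖₁` and
`|λⱼ| ≤ ‖f̂‖_∞ ≤ ‖f‖₁`, convolving with the polynomial of coefficients `f̂ - λⱼ` on `S` multiplies
the `L¹` norm by at most `‖f‖₁ + |λⱼ| ≤ 2‖f‖₁`. Since `λ₀ = 0`, one factor of `Pᵢ` is `f` itself,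
so the product can be started from `f`: the kernel `∑_{n ∈ S} eₙ`, whose `L¹` norm is not
controlled, is never estimated, and `‖Pᵢ‖₁ ≤ δ^{-k} (2‖f‖₁)^k`.
-/

namespace Lagrange

variable {F ι : Type*} [Field F] [DecidableEq ι]

lemma eval_basis (s : Finset ι) (v : ι → F) (i : ι) (z : F) :
    (Lagrange.basis s v i).eval z =
      (∏ j ∈ s.erase i, (v i - v j))⁻¹ * ∏ j ∈ s.erase i, (z - v j) := by
  simp [Lagrange.basis, basisDivisor, Polynomial.eval_prod, Finset.prod_mul_distrib,
    Finset.prod_inv_distrib]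

lemma sum_mul_eval_basis_of_mem {s t : Finset ι} {v : ι → F} (hvs : Set.InjOn v s)
    (hts : t ⊆ s) (r : ι → F) {l : ι} (hl : l ∈ t) :
    ∑ i ∈ t, r i * (Lagrange.basis s v i).eval (v l) = r l := by
  rw [Finset.sum_eq_single_of_mem l hl fun i _ hil => by rw [eval_basis_of_ne hil (hts hl),
    mul_zero], eval_basis_self hvs (hts hl), mul_one]

end Lagrange

open scoped Convolution
open ContinuousLinearMap (mul)

namespace AddCircle

variable {T : ℝ}

variable (T) in
def trigSum (s : Finset ℤ) : (ℤ → ℂ) →ₗ[ℂ] C(AddCircle T, ℂ) :=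
  ∑ n ∈ s, (LinearMap.proj n).smulRight (fourier n)

lemma trigSum_apply (s : Finset ℤ) (a : ℤ → ℂ) :
    trigSum T s a = ∑ n ∈ s, a n • fourier n := by
  simp [trigSum]

lemma trigSum_congr {s : Finset ℤ} {a b : ℤ → ℂ} (h : ∀ n ∈ s, a n = b n) :
    trigSum T s a = trigSum T s b := by
  simp only [trigSum_apply]
  exact Finset.sum_congr rfl fun n hn => by rw [h n hn]

variable [Fact (0 < T)]

def l1Norm (f : C(AddCircle T, ℂ)) : ℝ := ∫ x, ‖f x‖ ∂haarAddCircle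

lemma l1Norm_nonneg (f : C(AddCircle T, ℂ)) : 0 ≤ l1Norm f :=
  integral_nonneg fun _ => norm_nonneg _

lemma l1Norm_add_le (f g : C(AddCircle T, ℂ)) : l1Norm (f + g) ≤ l1Norm f + l1Norm g := by
  have hint {φ : AddCircle T → ℝ} (hφ : Continuous φ) : Integrable φ haarAddCircle :=
    hφ.integrable_of_hasCompactSupport (.of_compactSpace φ)
  rw [l1Norm, l1Norm, l1Norm, ← integral_add (hint (by fun_prop)) (hint (by fun_prop))]
  exact integral_mono (hint (by fun_prop)) (hint (by fun_prop)) fun x => norm_add_le _ _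

lemma l1Norm_smul (a : ℂ) (f : C(AddCircle T, ℂ)) : l1Norm (a • f) = ‖a‖ * l1Norm f := by
  simp only [l1Norm, ContinuousMap.smul_apply, norm_smul, integral_const_mul]

lemma l1Norm_sum_le {ι : Type*} (t : Finset ι) (f : ι → C(AddCircle T, ℂ)) :
    l1Norm (∑ i ∈ t, f i) ≤ ∑ i ∈ t, l1Norm (f i) :=
  Finset.le_sum_of_subadditive l1Norm (by simp [l1Norm]) l1Norm_add_le t f

lemma norm_fourierCoeff_le_l1Norm (f : C(AddCircle T, ℂ)) (n : ℤ) :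
    ‖fourierCoeff f n‖ ≤ l1Norm f :=
  (norm_integral_le_integral_norm _).trans_eq <| by
    simp only [l1Norm, norm_smul, fourier_apply, Circle.norm_coe, one_mul]

lemma integral_norm_convolution_le (F G : C(AddCircle T, ℂ)) :
    ∫ x, ‖(⇑F ⋆[mul ℂ ℂ, haarAddCircle] ⇑G) x‖ ∂haarAddCircle ≤ l1Norm F * l1Norm G := by
  set μ : Measure (AddCircle T) := haarAddCircle
  have hint : Integrable (fun p : AddCircle T × AddCircle T => ‖F p.2‖ * ‖G (p.1 - p.2)‖)
      (μ.prod μ) :=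
    ((F.continuous.comp continuous_snd).norm.mul
      (G.continuous.comp (continuous_fst.sub continuous_snd)).norm).integrable_of_hasCompactSupport
      (.of_compactSpace _)
  calc ∫ x, ‖(⇑F ⋆[mul ℂ ℂ, μ] ⇑G) x‖ ∂μ
      ≤ ∫ x, ∫ y, ‖F y‖ * ‖G (x - y)‖ ∂μ ∂μ := by
        refine integral_mono_of_nonneg (.of_forall fun _ => norm_nonneg _)
          hint.integral_prod_left (.of_forall fun x => ?_)
        dsimp only
        rw [convolution_mul]
        simpa only [norm_mul] using norm_integral_le_integral_norm (fun y => F y * G (x - y))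
    _ = ∫ y, ‖F y‖ * ∫ x, ‖G (x - y)‖ ∂μ ∂μ := by
        rw [integral_integral_swap hint]
        simp only [integral_const_mul]
    _ = l1Norm F * l1Norm G := by
        simp only [integral_sub_right_eq_self (fun x => ‖G x‖), integral_mul_const, l1Norm, μ]

lemma convolution_fourier (f : AddCircle T → ℂ) (n : ℤ) (x : AddCircle T) :
    (f ⋆[mul ℂ ℂ, haarAddCircle] fourier n) x = fourierCoeff f n * fourier n x := by
  have h : ∀ y, fourier n (x - y) = fourier n x * fourier (-n) y := fun y => by
    simp [fourier_apply, sub_eq_add_neg, smul_add, toCircle_add, smul_neg, neg_smul]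
  simp only [convolution_mul, h, fourierCoeff, smul_eq_mul]
  rw [← integral_mul_const]
  congr 1; ext y; ring

lemma fourierCoeff_trigSum {s : Finset ℤ} {n : ℤ} (hn : n ∈ s) (a : ℤ → ℂ) :
    fourierCoeff (trigSum T s a) n = a n := by
  rw [trigSum_apply, ContinuousMap.coe_sum, fourierCoeff.sum _ _ fun m _ =>
    (map_continuous _).integrable_of_hasCompactSupport (.of_compactSpace _)]
  simp only [Finset.sum_apply, ContinuousMap.coe_smul, fourierCoeff.const_smul,
    fourierCoeff_fourier, Pi.single_apply, smul_eq_mul, mul_ite, mul_one, mul_zero,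
    Finset.sum_ite_eq, if_pos hn]

lemma convolution_trigSum (f : C(AddCircle T, ℂ)) (s : Finset ℤ) (b : ℤ → ℂ) :
    ⇑f ⋆[mul ℂ ℂ, haarAddCircle] ⇑(trigSum T s b) =
      trigSum T s (fun n => fourierCoeff f n * b n) := by
  ext x
  simp only [convolution_mul, trigSum_apply, ContinuousMap.coe_sum, Finset.sum_apply,
    ContinuousMap.coe_smul, Pi.smul_apply, smul_eq_mul, Finset.mul_sum]
  rw [integral_finsetSum _ fun n _ => (by fun_prop : Continuous _).integrable_of_hasCompactSupport
    (.of_compactSpace _)]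
  refine Finset.sum_congr rfl fun n _ => ?_
  simp_rw [mul_left_comm _ (b n), integral_const_mul]
  rw [← convolution_mul, convolution_fourier]
  ring

lemma trigSum_convolution_trigSum (s : Finset ℤ) (a b : ℤ → ℂ) :
    ⇑(trigSum T s a) ⋆[mul ℂ ℂ, haarAddCircle] ⇑(trigSum T s b) = trigSum T s (a * b) := by
  rw [convolution_trigSum, trigSum_congr fun n hn => by rw [fourierCoeff_trigSum hn]]
  rfl

lemma l1Norm_trigSum_mul_le (s : Finset ℤ) (a b : ℤ → ℂ) :
    l1Norm (trigSum T s (a * b)) ≤ l1Norm (trigSum T s a) * l1Norm (trigSum T s b) := by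
  rw [l1Norm, ← trigSum_convolution_trigSum]
  exact integral_norm_convolution_le _ _

lemma norm_le_l1Norm_trigSum {s : Finset ℤ} {n : ℤ} (hn : n ∈ s) (a : ℤ → ℂ) :
    ‖a n‖ ≤ l1Norm (trigSum T s a) := by
  rw [← fourierCoeff_trigSum (T := T) hn a]
  exact norm_fourierCoeff_le_l1Norm _ n

lemma l1Norm_trigSum_mul_sub_const_le (s : Finset ℤ) (a b : ℤ → ℂ) (μ : ℂ) :
    l1Norm (trigSum T s (a * (b - fun _ => μ))) ≤
      l1Norm (trigSum T s a) * (l1Norm (trigSum T s b) + ‖μ‖) := by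
  have h : a * (b - fun _ => μ) = a * b + (-μ) • a := by
    ext n
    simp only [Pi.mul_apply, Pi.sub_apply, Pi.add_apply, Pi.smul_apply, smul_eq_mul]
    ring
  rw [h, map_add, map_smul]
  calc _ ≤ l1Norm (trigSum T s (a * b)) + ‖-μ‖ * l1Norm (trigSum T s a) :=
        (l1Norm_add_le _ _).trans_eq (by rw [l1Norm_smul])
    _ ≤ l1Norm (trigSum T s a) * l1Norm (trigSum T s b) + ‖μ‖ * l1Norm (trigSum T s a) := by
        rw [norm_neg]; gcongr; exact l1Norm_trigSum_mul_le s a b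
    _ = _ := by ring

lemma l1Norm_trigSum_mul_prod_sub_const_le {ι : Type*} (s : Finset ℤ) (t : Finset ι)
    (a b : ℤ → ℂ) (μ : ι → ℂ) :
    l1Norm (trigSum T s (a * ∏ j ∈ t, (b - fun _ => μ j))) ≤
      l1Norm (trigSum T s a) * ∏ j ∈ t, (l1Norm (trigSum T s b) + ‖μ j‖) := by
  classical
  induction t using Finset.induction_on generalizing a with
  | empty => simp
  | insert j t hj ih =>
    rw [Finset.prod_insert hj, Finset.prod_insert hj, ← mul_assoc, ← mul_assoc]
    refine (ih _).trans ?_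
    gcongr
    · exact Finset.prod_nonneg fun _ _ => add_nonneg (l1Norm_nonneg _) (norm_nonneg _)
    · exact l1Norm_trigSum_mul_sub_const_le s a b (μ j)

lemma l1Norm_trigSum_prod_sub_const_le {ι : Type*} [DecidableEq ι] (s : Finset ℤ)
    {t : Finset ι} (b : ℤ → ℂ) (μ : ι → ℂ) {j₀ : ι} (hj₀ : j₀ ∈ t) (hμ : μ j₀ = 0) :
    l1Norm (trigSum T s (∏ j ∈ t, (b - fun _ => μ j))) ≤
      ∏ j ∈ t, (l1Norm (trigSum T s b) + ‖μ j‖) := by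
  rw [← Finset.mul_prod_erase t _ hj₀, ← Finset.mul_prod_erase t _ hj₀, hμ, norm_zero, add_zero,
    ← Pi.zero_def, sub_zero]
  exact l1Norm_trigSum_mul_prod_sub_const_le (T := T) s (t.erase j₀) b b μ

lemma l1Norm_trigSum_eval_basis_le {ι : Type*} [DecidableEq ι] (s : Finset ℤ) (S : Finset ι)
    (v : ι → ℂ) {i j₀ : ι} (hj₀ : j₀ ∈ S.erase i) (hv : v j₀ = 0) (b : ℤ → ℂ) :
    l1Norm (trigSum T s fun n => (Lagrange.basis S v i).eval (b n)) ≤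
      (∏ j ∈ S.erase i, ‖v i - v j‖)⁻¹ * ∏ j ∈ S.erase i, (l1Norm (trigSum T s b) + ‖v j‖) := by
  have h : (fun n => (Lagrange.basis S v i).eval (b n)) =
      (∏ j ∈ S.erase i, (v i - v j))⁻¹ • ∏ j ∈ S.erase i, (b - fun _ => v j) := by
    ext n
    simp [Lagrange.eval_basis, Finset.prod_apply]
  rw [h, map_smul, l1Norm_smul, norm_inv, norm_prod]
  gcongr
  exact l1Norm_trigSum_prod_sub_const_le s b v hj₀ hv

lemma l1Norm_trigSum_eval_basis_le_of_separated {ι : Type*} [Fintype ι] [DecidableEq ι]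
    (s : Finset ℤ) (Λ : ι → ℂ) (b : ℤ → ℂ) {δ : ℝ} (hδ : 0 < δ)
    (hsep : ∀ i j, i ≠ j → δ ≤ ‖Λ i - Λ j‖) (hΛ : ∀ j, ‖Λ j‖ ≤ l1Norm (trigSum T s b))
    {i i₀ : ι} (hi : i ≠ i₀) (hΛ₀ : Λ i₀ = 0) :
    l1Norm (trigSum T s fun n => (Lagrange.basis Finset.univ Λ i).eval (b n)) ≤
      (δ⁻¹ * (2 * l1Norm (trigSum T s b))) ^ (Fintype.card ι - 1) := by
  set A := l1Norm (trigSum T s b)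
  have hA : 0 ≤ A := l1Norm_nonneg _
  have hcard : (Finset.univ.erase i).card = Fintype.card ι - 1 := by simp
  have hprod_sep : δ ^ (Fintype.card ι - 1) ≤ ∏ j ∈ Finset.univ.erase i, ‖Λ i - Λ j‖ := by
    rw [← hcard, ← Finset.prod_const]
    exact Finset.prod_le_prod (fun _ _ => hδ.le) fun j hj =>
      hsep i j (Finset.ne_of_mem_erase hj).symm
  have hprod_factors :
      ∏ j ∈ Finset.univ.erase i, (A + ‖Λ j‖) ≤ (2 * A) ^ (Fintype.card ι - 1) := by
    rw [← hcard, ← Finset.prod_const]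
    exact Finset.prod_le_prod (fun _ _ => add_nonneg hA (norm_nonneg _)) fun j _ => by
      linarith [hΛ j]
  refine (l1Norm_trigSum_eval_basis_le s _ Λ (Finset.mem_erase.2 ⟨hi.symm, Finset.mem_univ _⟩)
    hΛ₀ b).trans ?_
  rw [mul_pow, inv_pow]
  gcongr

end AddCircle

open Finset AddCircle

lemma trigL1_eq (c : ℤ →₀ ℂ) : trigL1 c = l1Norm (trigSum (2 * π) c.support c) := by
  simp [trigL1, l1Norm, trig, trigSum_apply]

lemma norm_apply_le_trigL1 (c : ℤ →₀ ℂ) (n : ℤ) : ‖c n‖ ≤ trigL1 c := by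
  rw [trigL1_eq]
  by_cases hn : n ∈ c.support
  · exact norm_le_l1Norm_trigSum hn _
  · rw [Finsupp.notMem_support_iff.1 hn, norm_zero]
    exact l1Norm_nonneg _

/-- Lagrange interpolation of `z ↦ z ^ m` at the nodes `Λ`; the node `Λ i₀ = 0` is not a value
of `c` on its support. -/
lemma trigPow_eq_sum_smul_trigSum_eval_basis {ι : Type*} [Fintype ι] [DecidableEq ι]
    (c : ℤ →₀ ℂ) (Λ : ι → ℂ) (hinj : Function.Injective Λ) (hran : range ⇑c ⊆ range Λ)
    {i₀ : ι} (hΛ : Λ i₀ = 0) (m : ℕ) :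
    trigPow c m = ∑ i ∈ univ.erase i₀,
      Λ i ^ m • trigSum (2 * π) c.support (fun n => (Lagrange.basis univ Λ i).eval (c n)) := by
  simp_rw [← map_smul, ← map_sum]
  rw [show trigPow c m = trigSum (2 * π) c.support (⇑c ^ m) by simp [trigPow, trigSum_apply]]
  refine trigSum_congr fun n hn => ?_
  obtain ⟨l, hl⟩ := hran ⟨n, rfl⟩
  have hl₀ : l ≠ i₀ := fun h => Finsupp.mem_support_iff.1 hn (by rw [← hl, h, hΛ])
  simp only [Finset.sum_apply, Pi.smul_apply, smul_eq_mul, Pi.pow_apply, ← hl]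
  exact (Lagrange.sum_mul_eval_basis_of_mem hinj.injOn (subset_univ _) (Λ · ^ m)
    (mem_erase.2 ⟨hl₀, mem_univ l⟩)).symm

lemma trigPowL1_le {ι : Type*} [Fintype ι] [DecidableEq ι] (c : ℤ →₀ ℂ) (Λ : ι → ℂ)
    (hinj : Function.Injective Λ) (hran : range ⇑c = range Λ) {i₀ : ι} (hΛ : Λ i₀ = 0)
    {δ lmax : ℝ} (hδ : 0 < δ) (hsep : ∀ i j, i ≠ j → δ ≤ ‖Λ i - Λ j‖)
    (hmax : ∀ i, ‖Λ i‖ ≤ lmax) (m : ℕ) :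
    trigPowL1 c m ≤
      (Fintype.card ι - 1 : ℕ) * lmax ^ m * (δ⁻¹ * (2 * trigL1 c)) ^ (Fintype.card ι - 1) := by
  have hΛ_le (j : ι) : ‖Λ j‖ ≤ l1Norm (trigSum (2 * π) c.support c) := by
    obtain ⟨n, hn⟩ := hran.ge ⟨j, rfl⟩
    exact trigL1_eq c ▸ hn ▸ norm_apply_le_trigL1 c n
  have hlmax : 0 ≤ lmax := (norm_nonneg _).trans (hmax i₀)
  calc trigPowL1 c m = l1Norm (∑ i ∈ univ.erase i₀, Λ i ^ m •
        trigSum (2 * π) c.support fun n => (Lagrange.basis univ Λ i).eval (c n)) := by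
        rw [← trigPow_eq_sum_smul_trigSum_eval_basis c Λ hinj hran.subset hΛ]; rfl
    _ ≤ ∑ i ∈ univ.erase i₀, lmax ^ m * (δ⁻¹ * (2 * trigL1 c)) ^ (Fintype.card ι - 1) := by
        refine (l1Norm_sum_le _ _).trans (sum_le_sum fun i hi => ?_)
        rw [l1Norm_smul, norm_pow, trigL1_eq]
        gcongr
        · exact l1Norm_nonneg _
        · exact hmax i
        · exact l1Norm_trigSum_eval_basis_le_of_separated _ Λ c hδ hsep hΛ_le
            (ne_of_mem_erase hi) hΛ
    _ = _ := by
        rw [sum_const, card_erase_of_mem (mem_univ _), card_univ, nsmul_eq_mul, mul_assoc]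

theorem conv_power_l1_bound_general (c : ℤ →₀ ℂ) (k : ℕ) (Λ : Fin (k + 1) → ℂ)
    (hΛ0 : Λ 0 = 0) (hinj : Function.Injective Λ)
    (hran : Set.range ⇑c = Set.range Λ)
    (δ lmax : ℝ)
    (hδ : IsLeast {d : ℝ | ∃ i j, i ≠ j ∧ d = dist (Λ i) (Λ j)} δ)
    (hmax : IsGreatest (Set.range fun i => ‖Λ i‖) lmax)
    (m : ℕ) :
    trigPowL1 c m ≤ (k : ℝ) * δ⁻¹ ^ k * 2 ^ k * trigL1 c ^ k * lmax ^ m := by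
  have hδpos : 0 < δ := by
    obtain ⟨i, j, hij, rfl⟩ := hδ.1
    exact dist_pos.2 (hinj.ne hij)
  have hsep : ∀ i j, i ≠ j → δ ≤ ‖Λ i - Λ j‖ := fun i j hij =>
    hδ.2 ⟨i, j, hij, (dist_eq_norm _ _).symm⟩
  have h := trigPowL1_le c Λ hinj hran hΛ0 hδpos hsep (fun i => hmax.2 ⟨i, rfl⟩) m
  rw [Fintype.card_fin, add_tsub_cancel_right] at h
  exact h.trans_eq (by ring)

/-- **Lemma 11.** Let `f` be a trigonometric polynomial whose set of Fourier coefficient values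
is `{0, λ₁, …, λ_k}` (pairwise distinct, `λ₀ = 0`), let `δ = min_{i ≠ j} |λᵢ − λⱼ|` and
`λ_max = max |λᵢ|`. Then for every `m ≥ 1`,
`‖f^{*m}‖_{L¹} ≤ k δ^{-k} 2^k ‖f‖_{L¹}^k λ_max^m`. -/
theorem conv_power_l1_bound (c : ℤ →₀ ℂ) (k : ℕ) (Λ : Fin (k + 1) → ℂ)
    (hΛ0 : Λ 0 = 0) (hinj : Function.Injective Λ)
    (hran : Set.range ⇑c = Set.range Λ)
    (δ lmax : ℝ)
    (hδ : IsLeast {d : ℝ | ∃ i j, i ≠ j ∧ d = dist (Λ i) (Λ j)} δ)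
    (hmax : IsGreatest (Set.range fun i => ‖Λ i‖) lmax)
    (m : ℕ) (hm : 1 ≤ m) :
    trigPowL1 c m ≤ (k : ℝ) * δ⁻¹ ^ k * 2 ^ k * trigL1 c ^ k * lmax ^ m :=
  conv_power_l1_bound_general c k Λ hΛ0 hinj hran δ lmax hδ hmax m
end
end

section
/- Let S = ⋃_{k=1}^∞ B_k ⊂ ℂ be a union of open balls such that 0 ∈ closure(S). Then there exists a set K ⊂ ℂ homeomorphic to the Cantor set such that K − K ⊂ closure(S ∪ (−S)), where K − K = {x − y : x, y ∈ K} and −S = {−z : z ∈ S}. -/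
/-! Write `S = ⋃ k, B k`. Since `S` is open and accumulates at `0`, one can pick balls
`ball (a n) (r n) ⊆ S` with `r n ≤ ‖a n‖` and `‖a (n + 1)‖ < r n / 4`. Let `K` be the set of
subsums `∑ n ∈ A, a n`, `A ⊆ ℕ`. If two subsums first differ at the index `N`, their difference is
`± a N` up to a tail of norm `< r N / 3`, so it lies in `S ∪ -S`. In particular the subsum map from
the Cantor space `ℕ → Bool` is injective, so `K` is its homeomorphic image. -/

open Filter Function Metric Set Topology
open scoped Pointwise

instance Pi.perfectSpace {ι : Type*} {X : ι → Type*} [∀ i, TopologicalSpace (X i)] [Infinite ι]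
    [∀ i, Nontrivial (X i)] : PerfectSpace (∀ i, X i) := by
  classical
  refine perfectSpace_iff_forall_not_isolated.2 fun x => ?_
  choose y hy using fun i => exists_ne (x i)
  have hflip : Tendsto (fun i => update x i (y i)) cofinite (𝓝[≠] x) :=
    tendsto_nhdsWithin_iff.2
      ⟨tendsto_pi_nhds.2 fun j => tendsto_const_nhds.congr'
          ((eventually_cofinite_ne j).mono fun i hi => (update_of_ne hi.symm _ _).symm),
        .of_forall fun i h => hy i (by simpa using congrFun h i)⟩
  exact hflip.neBot

theorem preperfect_range_of_continuous_injective {α β : Type*} [TopologicalSpace α]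
    [TopologicalSpace β] [PerfectSpace α] {f : α → β} (hf : Continuous f) (hinj : Injective f) :
    Preperfect (range f) := by
  rintro _ ⟨x, rfl⟩
  have : Tendsto f (𝓝[≠] x) (𝓝[≠] (f x) ⊓ 𝓟 (range f)) :=
    le_inf (hf.continuousWithinAt.tendsto_nhdsWithin fun _ hy => hinj.ne hy)
      (tendsto_principal.2 (.of_forall mem_range_self))
  exact this.neBot

theorem tsum_nat_add_le_of_le_mul {u : ℕ → ℝ} {c : ℝ} (hu : ∀ n, 0 ≤ u n) (hc₀ : 0 ≤ c)
    (hc₁ : c < 1) (h : ∀ n, u (n + 1) ≤ c * u n) (k : ℕ) :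
    ∑' m, u (m + k) ≤ u k / (1 - c) := by
  have hgeom (m : ℕ) : u (m + k) ≤ c ^ m * u k := by
    simpa using le_geom (u := fun m => u (m + k)) hc₀ m fun j _ => by
      simpa only [add_right_comm] using h (j + k)
  have hsum : Summable fun m => c ^ m * u k := (summable_geometric_of_lt_one hc₀ hc₁).mul_right _
  calc ∑' m, u (m + k) ≤ ∑' m, c ^ m * u k :=
        (hsum.of_nonneg_of_le (fun _ => hu _) hgeom).tsum_le_tsum hgeom hsum
    _ = u k / (1 - c) := by rw [tsum_mul_right, tsum_geometric_of_lt_one hc₀ hc₁, inv_mul_eq_div]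

section CantorSum

variable {E : Type*} [NormedAddCommGroup E]

noncomputable def cantorSum (a : ℕ → E) (ε : ℕ → Bool) : E :=
  ∑' n, if ε n then a n else 0

theorem norm_ite_le (b : Bool) (x : E) : ‖if b then x else 0‖ ≤ ‖x‖ := by
  cases b <;> simp

theorem norm_ite_sub_ite_le (b b' : Bool) (x : E) :
    ‖(if b then x else 0) - if b' then x else 0‖ ≤ ‖x‖ := by
  cases b <;> cases b' <;> simp

variable [CompleteSpace E] {a : ℕ → E}

theorem continuous_cantorSum (ha : Summable (‖a ·‖)) : Continuous (cantorSum a) :=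
  continuous_tsum
    (fun n => (continuous_of_discreteTopology (f := fun b : Bool => if b then a n else 0)).comp
      (continuous_apply n)) ha fun n ε => norm_ite_le (ε n) (a n)

theorem cantorSum_sub_mem_closedBall (ha : Summable (‖a ·‖)) {ε ε' : ℕ → Bool} {N : ℕ}
    (hlt : ∀ m < N, ε m = ε' m) (hε : ε N = true) (hε' : ε' N = false) :
    cantorSum a ε - cantorSum a ε' ∈ closedBall (a N) (∑' n, ‖a (n + (N + 1))‖) := by
  have hsum (η : ℕ → Bool) : Summable fun n => if η n then a n else 0 :=
    .of_norm_bounded ha fun n => norm_ite_le _ _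
  set d : ℕ → E := fun n => (if ε n then a n else 0) - if ε' n then a n else 0
  have hhead : ∑ n ∈ Finset.range (N + 1), d n = a N := by
    rw [Finset.sum_range_succ,
      Finset.sum_eq_zero fun m hm => by simp [d, hlt m (Finset.mem_range.1 hm)]]
    simp [d, hε, hε']
  rw [mem_closedBall, dist_eq_norm, cantorSum, cantorSum, ← (hsum ε).tsum_sub (hsum ε'),
    ← ((hsum ε).sub (hsum ε')).sum_add_tsum_nat_add (N + 1), hhead, add_sub_cancel_left]
  exact tsum_of_norm_bounded ((summable_nat_add_iff (N + 1)).2 ha).hasSum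
    fun n => norm_ite_sub_ite_le _ _ _

theorem exists_cantorSum_sub_mem_closedBall (ha : Summable (‖a ·‖)) {ε ε' : ℕ → Bool}
    (h : ε ≠ ε') : ∃ N, cantorSum a ε - cantorSum a ε' ∈ closedBall (a N) (∑' n, ‖a (n + (N + 1))‖)
      ∨ cantorSum a ε' - cantorSum a ε ∈ closedBall (a N) (∑' n, ‖a (n + (N + 1))‖) := by
  classical
  have hex : ∃ n, ε n ≠ ε' n := ne_iff.1 h
  have hlt (m : ℕ) (hm : m < Nat.find hex) : ε m = ε' m := not_not.1 (Nat.find_min hex hm)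
  have hne := Nat.find_spec hex
  refine ⟨Nat.find hex, ?_⟩
  by_cases hN : ε (Nat.find hex) = true
  · exact .inl (cantorSum_sub_mem_closedBall ha hlt hN (by simpa [hN] using hne.symm))
  · exact .inr (cantorSum_sub_mem_closedBall ha (fun m hm => (hlt m hm).symm)
      (by simpa [hN] using hne) (by simpa using hN))

theorem cantorSum_injective (ha : Summable (‖a ·‖))
    (hlac : ∀ N, ∑' n, ‖a (n + (N + 1))‖ < ‖a N‖) : Injective (cantorSum a) := by
  intro ε ε' h
  by_contra hne
  obtain ⟨N, hN | hN⟩ := exists_cantorSum_sub_mem_closedBall ha hne <;>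
  · rw [h, sub_self, mem_closedBall, dist_zero_left] at hN
    exact (hlac N).not_ge hN

theorem range_cantorSum_sub_subset (ha : Summable (‖a ·‖)) {S : Set E} {r : ℕ → ℝ}
    (htail : ∀ N, ∑' n, ‖a (n + (N + 1))‖ < r N) (hS : ∀ N, ball (a N) (r N) ⊆ S) :
    range (cantorSum a) - range (cantorSum a) ⊆ S ∪ -S ∪ {0} := by
  rintro _ ⟨_, ⟨ε, rfl⟩, _, ⟨ε', rfl⟩, rfl⟩
  by_cases h : ε = ε'
  · simp [h]
  obtain ⟨N, hN | hN⟩ := exists_cantorSum_sub_mem_closedBall ha h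
  · exact .inl (.inl (hS N (closedBall_subset_ball (htail N) hN)))
  · exact .inl (.inr (by
    show cantorSum a ε - cantorSum a ε' ∈ -S
    rw [Set.mem_neg, neg_sub]; exact hS N (closedBall_subset_ball (htail N) hN)))

end CantorSum

section Selection

variable {E : Type*} [NormedAddCommGroup E] [(𝓝[≠] (0 : E)).NeBot] {S : Set E}

theorem exists_ball_subset_of_mem_closure (hS : IsOpen S) (h0 : 0 ∈ closure S) {δ : ℝ}
    (hδ : 0 < δ) : ∃ z r, 0 < r ∧ r ≤ ‖z‖ ∧ ball z r ⊆ S ∧ ‖z‖ < δ := by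
  obtain ⟨w, ⟨hwδ, hwS⟩, hw0⟩ := (dense_compl_singleton (0 : E)).inter_open_nonempty _
    (isOpen_ball.inter hS) (mem_closure_iff.1 h0 _ isOpen_ball (mem_ball_self hδ))
  obtain ⟨ρ, hρ, hρS⟩ := Metric.isOpen_iff.1 hS w hwS
  exact ⟨w, min ρ ‖w‖, lt_min hρ (norm_pos_iff.2 hw0), min_le_right _ _,
    (ball_subset_ball (min_le_left _ _)).trans hρS, by simpa using hwδ⟩

theorem exists_seq_ball_subset_of_mem_closure (hS : IsOpen S) (h0 : 0 ∈ closure S) :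
    ∃ (a : ℕ → E) (r : ℕ → ℝ), (∀ n, 0 < r n ∧ r n ≤ ‖a n‖ ∧ ball (a n) (r n) ⊆ S) ∧
      ∀ n, ‖a (n + 1)‖ < r n / 4 := by
  let T := {p : E × ℝ // 0 < p.2 ∧ p.2 ≤ ‖p.1‖ ∧ ball p.1 p.2 ⊆ S}
  have hsel {δ : ℝ} (hδ : 0 < δ) : ∃ p : T, ‖p.1.1‖ < δ := by
    obtain ⟨z, r, hr, hrz, hball, hzδ⟩ := exists_ball_subset_of_mem_closure hS h0 hδ
    exact ⟨⟨(z, r), hr, hrz, hball⟩, hzδ⟩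
  obtain ⟨p₀, -⟩ := hsel one_pos
  choose next hnext using fun p : T => hsel (div_pos p.2.1 four_pos)
  refine ⟨fun n => (next^[n] p₀).1.1, fun n => (next^[n] p₀).1.2, fun n => (next^[n] p₀).2,
    fun n => ?_⟩
  simpa only [iterate_succ_apply'] using hnext (next^[n] p₀)

theorem exists_seq_tsum_norm_lt_of_mem_closure (hS : IsOpen S) (h0 : 0 ∈ closure S) :
    ∃ (a : ℕ → E) (r : ℕ → ℝ), Summable (‖a ·‖) ∧ (∀ N, ∑' n, ‖a (n + (N + 1))‖ < r N) ∧
      (∀ N, r N ≤ ‖a N‖) ∧ ∀ N, ball (a N) (r N) ⊆ S := by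
  obtain ⟨a, r, hr, hstep⟩ := exists_seq_ball_subset_of_mem_closure hS h0
  have hratio (n : ℕ) : ‖a (n + 1)‖ ≤ 4⁻¹ * ‖a n‖ := by linarith [hstep n, (hr n).2.1]
  refine ⟨a, r, summable_of_ratio_norm_eventually_le (by norm_num : (4⁻¹ : ℝ) < 1)
      (.of_forall fun n => by simpa only [norm_norm] using hratio n), fun N => ?_,
    fun N => (hr N).2.1, fun N => (hr N).2.2⟩
  calc ∑' n, ‖a (n + (N + 1))‖ ≤ ‖a (N + 1)‖ / (1 - 4⁻¹) :=
        tsum_nat_add_le_of_le_mul (fun _ => norm_nonneg _) (by norm_num) (by norm_num) hratio _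
    _ < r N := by
      rw [show (1 : ℝ) - 4⁻¹ = 3 / 4 by norm_num]
      linarith [hstep N, (hr N).1]

end Selection

/-- **Lemma 16.** Let `S = ⋃ₖ Bₖ ⊆ ℂ` be a union of open balls with `0 ∈ closure S`. Then there
exists a set `K` homeomorphic to the Cantor set (nonempty, compact, perfect, totally
disconnected) such that `K − K ⊆ closure (S ∪ −S)`. -/
theorem exists_cantor_sub_self_subset_closure (B : ℕ → Set ℂ)
    (hB : ∀ k, ∃ (c : ℂ) (ρ : ℝ), B k = Metric.ball c ρ)
    (h0 : (0 : ℂ) ∈ closure (⋃ k, B k)) :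
    ∃ K : Set ℂ, K.Nonempty ∧ IsCompact K ∧ Perfect K ∧ IsTotallyDisconnected K ∧
      K - K ⊆ closure ((⋃ k, B k) ∪ -(⋃ k, B k)) := by
  have hS : IsOpen (⋃ k, B k) := isOpen_iUnion fun k => by
    obtain ⟨c, ρ, hk⟩ := hB k
    exact hk ▸ isOpen_ball
  obtain ⟨a, r, ha, htail, hr, hball⟩ := exists_seq_tsum_norm_lt_of_mem_closure hS h0
  have hcont := continuous_cantorSum ha
  have hinj := cantorSum_injective ha fun N => (htail N).trans_le (hr N)
  refine ⟨range (cantorSum a), range_nonempty _, isCompact_range hcont,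
    ⟨(isCompact_range hcont).isClosed, preperfect_range_of_continuous_injective hcont hinj⟩,
    ((hcont.isClosedEmbedding hinj).isEmbedding.isTotallyDisconnected_range).2 inferInstance, ?_⟩
  calc range (cantorSum a) - range (cantorSum a) ⊆ _ ∪ _ ∪ {0} :=
        range_cantorSum_sub_subset ha htail hball
    _ ⊆ _ := union_subset subset_closure (singleton_subset_iff.2 (closure_mono subset_union_left h0))
end

section
/- Let (m_j), (r_j), (n_j) be increasing sequences of positive integers satisfying r_k > 2·Σ_{j=1}^{k−1} ((2^{n_j} − 1)m_j + r_j) for all k ≥ 2, and let (c_j) be a sequence of positive integers with c_j ∈ {r_j, m_j + r_j, 2m_j + r_j, …, (2^{n_j} − 1)m_j + r_j} for every j. If an integer s has a representation s = Σ_{j=1}^{N} b_j c_j with N ∈ ℕ, b_j ∈ {−1, 0, 1} and b_N ≠ 0, then this representation is unique: if also s = Σ_{j=1}^{M} b'_j c_j with b'_j ∈ {−1, 0, 1} and b'_M ≠ 0, then N = M and b_j = b'_j for all j. -/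
/-!
Every `c_k` exceeds twice the sum of its predecessors, so a combination `∑ d_j c_j` with
`|d_j| ≤ 2` and top coefficient `d_K ≠ 0` has absolute value at least
`c_K - 2 ∑_{j<K} c_j > 0`.
The difference of two signed representations of `s`, padded by zeros, is such a combination
summing to `0`, hence vanishes identically.
-/

open Finset

section Superincreasing

variable {c : ℕ → ℕ}

theorem abs_sum_mul_lt_of_superincreasing (hc : ∀ k, 2 * ∑ j ∈ Icc 1 k, c j < c (k + 1))
    {d : ℕ → ℤ} (hd : ∀ j, |d j| ≤ 2) (K : ℕ) :
    |∑ j ∈ Icc 1 K, d j * c j| < c (K + 1) :=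
  calc |∑ j ∈ Icc 1 K, d j * c j|
      ≤ ∑ j ∈ Icc 1 K, |d j * c j| := abs_sum_le_sum_abs _ _
    _ ≤ ∑ j ∈ Icc 1 K, 2 * (c j : ℤ) := by
        gcongr with j
        rw [abs_mul, Nat.abs_cast]
        exact mul_le_mul_of_nonneg_right (hd j) (Nat.cast_nonneg _)
    _ < c (K + 1) := by rw [← mul_sum]; exact_mod_cast hc K

theorem eq_zero_of_sum_mul_eq_zero_of_superincreasing
    (hc : ∀ k, 2 * ∑ j ∈ Icc 1 k, c j < c (k + 1)) {d : ℕ → ℤ} (hd : ∀ j, |d j| ≤ 2) :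
    ∀ K, ∑ j ∈ Icc 1 K, d j * c j = 0 → ∀ j ∈ Icc 1 K, d j = 0
  | 0, _, j, hj => by simp at hj
  | K + 1, hsum, j, hj => by
    rw [sum_Icc_succ_top (by omega)] at hsum
    have htop : d (K + 1) = 0 := by
      by_contra hne
      have hbig : (c (K + 1) : ℤ) ≤ |d (K + 1) * c (K + 1)| := by
        rw [abs_mul, Nat.abs_cast]
        exact le_mul_of_one_le_left (Nat.cast_nonneg _) (Int.one_le_abs hne)
      rw [eq_neg_of_add_eq_zero_right hsum, abs_neg] at hbig
      exact hbig.not_gt (abs_sum_mul_lt_of_superincreasing hc hd K)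
    rcases (mem_Icc.mp hj).2.lt_or_eq with hlt | rfl
    · rw [htop, zero_mul, add_zero] at hsum
      exact eq_zero_of_sum_mul_eq_zero_of_superincreasing hc hd K hsum j
        (mem_Icc.mpr ⟨(mem_Icc.mp hj).1, by omega⟩)
    · exact htop

theorem eqOn_of_sum_mul_eq_of_superincreasing (hc : ∀ k, 2 * ∑ j ∈ Icc 1 k, c j < c (k + 1))
    {x y : ℕ → ℤ} (hx : ∀ j, |x j| ≤ 1)
    (hy : ∀ j, |y j| ≤ 1) {K : ℕ}
    (hsum : ∑ j ∈ Icc 1 K, x j * c j = ∑ j ∈ Icc 1 K, y j * c j) :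
    ∀ j ∈ Icc 1 K, x j = y j := by
  have hd : ∀ j, |x j - y j| ≤ 2 := fun j =>
    (abs_sub _ _).trans (by linarith [hx j, hy j])
  have hzero : ∑ j ∈ Icc 1 K, (x j - y j) * c j = 0 := by
    simp only [sub_mul, sum_sub_distrib, hsum, sub_self]
  intro j hj
  exact sub_eq_zero.mp (eq_zero_of_sum_mul_eq_zero_of_superincreasing hc hd K hzero j hj)

end Superincreasing

theorem two_mul_sum_Icc_lt_of_gap {c r u : ℕ → ℕ} (hr₁ : 0 < r 1)
    (hgap : ∀ k, 2 ≤ k → 2 * ∑ j ∈ Icc 1 (k - 1), u j < r k)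
    (hcu : ∀ j, c j ≤ u j) (hrc : ∀ j, r j ≤ c j) (k : ℕ) :
    2 * ∑ j ∈ Icc 1 k, c j < c (k + 1) := by
  rcases k.eq_zero_or_pos with rfl | hk
  · simpa using hr₁.trans_le (hrc 1)
  · calc 2 * ∑ j ∈ Icc 1 k, c j ≤ 2 * ∑ j ∈ Icc 1 (k + 1 - 1), u j := by
          rw [Nat.add_sub_cancel]; gcongr with j; exact hcu j
      _ < r (k + 1) := hgap (k + 1) (by omega)
      _ ≤ c (k + 1) := hrc _

theorem sum_Icc_ite_le {N K : ℕ} (h : N ≤ K) (f : ℕ → ℤ) :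
    ∑ j ∈ Icc 1 K, (if j ≤ N then f j else 0) = ∑ j ∈ Icc 1 N, f j := by
  rw [← sum_filter]
  congr 1
  ext j
  simp only [mem_filter, mem_Icc]
  omega

theorem abs_le_one_of_mem_signs {x : ℤ} (hx : x = -1 ∨ x = 0 ∨ x = 1) : |x| ≤ 1 := by
  rcases hx with rfl | rfl | rfl <;> norm_num

theorem eq_of_padded_eqOn {α : Type*} [Zero α] {b b' : ℕ → α} {N M : ℕ}
    (hbN : b N ≠ 0) (hbM : b' M ≠ 0)
    (h : ∀ j ∈ Icc 1 (max N M), (if j ≤ N then b j else 0) = (if j ≤ M then b' j else 0)) :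
    N = M ∧ ∀ j, 1 ≤ j → j ≤ N → b j = b' j := by
  have hNM : N = M := by
    by_contra hne
    rcases Nat.lt_or_gt_of_ne hne with hlt | hlt
    · have := h M (mem_Icc.mpr ⟨by omega, le_max_right N M⟩)
      simp only [hlt.not_ge, le_refl, ↓reduceIte] at this
      exact hbM this.symm
    · have := h N (mem_Icc.mpr ⟨by omega, le_max_left N M⟩)
      simp only [hlt.not_ge, le_refl, ↓reduceIte] at this
      exact hbN this
  refine ⟨hNM, fun j hj1 hjN => ?_⟩
  simpa only [hjN, hNM ▸ hjN, ↓reduceIte] using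
    h j (mem_Icc.mpr ⟨hj1, hjN.trans (le_max_left N M)⟩)

theorem signed_representation_unique_general (m r n : ℕ → ℕ)
    (hrpos : ∀ j, 0 < r j)
    (hgap : ∀ k, 2 ≤ k →
      2 * ∑ j ∈ Finset.Icc 1 (k - 1), ((2 ^ n j - 1) * m j + r j) < r k)
    (c : ℕ → ℕ) (hc : ∀ j, ∃ l : ℕ, l ≤ 2 ^ n j - 1 ∧ c j = l * m j + r j)
    (s : ℤ) (N M : ℕ) (b b' : ℕ → ℤ)
    (hb : ∀ j, b j = -1 ∨ b j = 0 ∨ b j = 1)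
    (hb' : ∀ j, b' j = -1 ∨ b' j = 0 ∨ b' j = 1)
    (hbN : b N ≠ 0) (hbM : b' M ≠ 0)
    (hs : s = ∑ j ∈ Finset.Icc 1 N, b j * (c j : ℤ))
    (hs' : s = ∑ j ∈ Finset.Icc 1 M, b' j * (c j : ℤ)) :
    N = M ∧ ∀ j, 1 ≤ j → j ≤ N → b j = b' j := by
  have hsuper : ∀ k, 2 * ∑ j ∈ Icc 1 k, c j < c (k + 1) := by
    refine two_mul_sum_Icc_lt_of_gap (hrpos 1) hgap (fun j => ?_) (fun j => ?_) <;>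
      obtain ⟨l, hl, hcl⟩ := hc j
    · rw [hcl]; gcongr
    · omega
  set x : ℕ → ℤ := fun j => if j ≤ N then b j else 0
  set y : ℕ → ℤ := fun j => if j ≤ M then b' j else 0
  have hxy : ∀ j ∈ Icc 1 (max N M), x j = y j := by
    refine eqOn_of_sum_mul_eq_of_superincreasing hsuper
      (fun j => ?_) (fun j => ?_) ?_
    · by_cases h : j ≤ N <;> simp [x, h, abs_le_one_of_mem_signs (hb j)]
    · by_cases h : j ≤ M <;> simp [y, h, abs_le_one_of_mem_signs (hb' j)]
    · simp only [x, y, ite_mul, zero_mul]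
      rw [sum_Icc_ite_le (le_max_left N M), sum_Icc_ite_le (le_max_right N M), ← hs, ← hs']
  exact eq_of_padded_eqOn hbN hbM hxy

/-- **Lemma 21.** Let `(m_j), (r_j), (n_j)` (indexed by positive integers) be increasing
sequences of positive integers with `r_k > 2·Σ_{j=1}^{k-1}((2^{n_j}-1)m_j + r_j)` for `k ≥ 2`,
and let `c_j = l·m_j + r_j` for some `0 ≤ l ≤ 2^{n_j} - 1`. Then the representation of an
integer `s` as `s = Σ_{j=1}^N b_j c_j` with `b_j ∈ {-1,0,1}` and `b_N ≠ 0` is unique. -/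
theorem signed_representation_unique (m r n : ℕ → ℕ)
    (hm : StrictMono m) (hr : StrictMono r) (hn : StrictMono n)
    (hmpos : ∀ j, 0 < m j) (hrpos : ∀ j, 0 < r j) (hnpos : ∀ j, 0 < n j)
    (hgap : ∀ k, 2 ≤ k →
      2 * ∑ j ∈ Finset.Icc 1 (k - 1), ((2 ^ n j - 1) * m j + r j) < r k)
    (c : ℕ → ℕ) (hc : ∀ j, ∃ l : ℕ, l ≤ 2 ^ n j - 1 ∧ c j = l * m j + r j)
    (s : ℤ) (N M : ℕ) (hN : 1 ≤ N) (hM : 1 ≤ M) (b b' : ℕ → ℤ)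
    (hb : ∀ j, b j = -1 ∨ b j = 0 ∨ b j = 1)
    (hb' : ∀ j, b' j = -1 ∨ b' j = 0 ∨ b' j = 1)
    (hbN : b N ≠ 0) (hbM : b' M ≠ 0)
    (hs : s = ∑ j ∈ Finset.Icc 1 N, b j * (c j : ℤ))
    (hs' : s = ∑ j ∈ Finset.Icc 1 M, b' j * (c j : ℤ)) :
    N = M ∧ ∀ j, 1 ≤ j → j ≤ N → b j = b' j :=
  signed_representation_unique_general m r n hrpos hgap c hc s N M b b' hb hb' hbN hbM hs hs'
end

section
/- For every n ∈ ℕ, the Rudin–Shapiro polynomial P_n has the form P_n(t) = Σ_{k=0}^{2^n − 1} a_k e^{ikt} with a_k ∈ {−1, 1} for all 0 ≤ k ≤ 2^n − 1; consequently ‖P_n‖_{L²(𝕋)} = 2^{n/2} (with respect to normalized Lebesgue measure on 𝕋), and moreover ‖P_n‖_{C(𝕋)} = sup_t |P_n(t)| ≤ 2^{(n+1)/2}. -/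
/-!
Since `|e^{i2ⁿt}| = 1`, the parallelogram law gives `|P_{n+1}|² + |Q_{n+1}|² = 2(|P_n|² + |Q_n|²)`,
so `|P_n|² + |Q_n|² = 2^{n+1}` pointwise, which bounds `|P_n|`. The coefficient string of `P_{n+1}`
(resp. `Q_{n+1}`) is that of `P_n` followed by that of `Q_n` (resp. `-Q_n`), so all coefficients
are `±1`, and Parseval's identity turns this into `‖P_n‖₂² = 2ⁿ`.
-/

open MeasureTheory Filter Complex Set AddCircle
open scoped Real ComplexConjugate

noncomputable section

/-- The pair of Rudin–Shapiro polynomials `(P_n, Q_n)`, defined recursively by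
`P₀ ≡ 1`, `Q₀ ≡ 1`, `P_{n+1}(t) = P_n(t) + e^{i 2^n t} Q_n(t)` and
`Q_{n+1}(t) = P_n(t) − e^{i 2^n t} Q_n(t)`. -/
def RS : ℕ → (ℝ → ℂ) × (ℝ → ℂ)
  | 0 => (fun _ => 1, fun _ => 1)
  | (n + 1) =>
      (fun t => (RS n).1 t + Complex.exp (Complex.I * 2 ^ n * t) * (RS n).2 t,
       fun t => (RS n).1 t - Complex.exp (Complex.I * 2 ^ n * t) * (RS n).2 t)

/-- The `n`-th Rudin–Shapiro polynomial `P_n`. -/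
def RSP (n : ℕ) : ℝ → ℂ := (RS n).1

open Finset

theorem norm_sq_RS_fst_add_norm_sq_RS_snd (n : ℕ) (t : ℝ) :
    ‖(RS n).1 t‖ ^ 2 + ‖(RS n).2 t‖ ^ 2 = 2 ^ (n + 1) := by
  induction n with
  | zero => norm_num [RS]
  | succ n ih =>
    have hz : ‖exp (I * 2 ^ n * t)‖ = 1 := by
      simpa [mul_assoc] using norm_exp_I_mul_ofReal (2 ^ n * t)
    calc ‖(RS n).1 t + exp (I * 2 ^ n * t) * (RS n).2 t‖ ^ 2
          + ‖(RS n).1 t - exp (I * 2 ^ n * t) * (RS n).2 t‖ ^ 2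
        = 2 * (‖(RS n).1 t‖ ^ 2 + ‖(RS n).2 t‖ ^ 2) := by
          rw [parallelogram_law_with_norm ℝ, norm_mul, hz, one_mul]
      _ = 2 ^ (n + 2) := by rw [ih]; ring

theorem integral_exp_I_mul_intCast_mul (m : ℤ) :
    ∫ t in (0 : ℝ)..2 * π, exp (I * m * t) = if m = 0 then (2 * π : ℂ) else 0 := by
  split_ifs with hm
  · simp [hm]
  · have hc : I * m ≠ 0 := by simp [hm]
    rw [integral_exp_mul_complex hc]
    have hper : exp (I * m * (2 * π)) = 1 := by
      rw [← exp_int_mul_two_pi_mul_I m]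
      ring_nf
    simp [hper]

theorem integral_exp_I_mul_mul_conj_exp_I_mul (j k : ℕ) :
    ∫ t in (0 : ℝ)..2 * π, exp (I * j * t) * conj (exp (I * k * t)) =
      if j = k then (2 * π : ℂ) else 0 := by
  have hprod (t : ℝ) :
      exp (I * j * t) * conj (exp (I * k * t)) = exp (I * ((j : ℤ) - k : ℤ) * t) := by
    rw [← exp_conj, ← exp_add]
    congr 1
    simp only [map_mul, conj_I, conj_natCast, conj_ofReal]
    push_cast
    ring
  simp_rw [hprod, integral_exp_I_mul_intCast_mul, sub_eq_zero, Nat.cast_inj]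

theorem integral_norm_sq_sum_mul_exp (s : Finset ℕ) (c : ℕ → ℂ) :
    ∫ t in (0 : ℝ)..2 * π, ‖∑ k ∈ s, c k * exp (I * k * t)‖ ^ 2 = 2 * π * ∑ k ∈ s, ‖c k‖ ^ 2 := by
  apply ofReal_injective
  have hexpand (t : ℝ) : ((‖∑ k ∈ s, c k * exp (I * k * t)‖ ^ 2 : ℝ) : ℂ) =
      ∑ j ∈ s, ∑ k ∈ s, c j * conj (c k) * (exp (I * j * t) * conj (exp (I * k * t))) := by
    rw [ofReal_pow, ← mul_conj', map_sum, sum_mul_sum]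
    refine sum_congr rfl fun j _ => sum_congr rfl fun k _ => ?_
    rw [map_mul]
    ring
  have hcont (j k : ℕ) : Continuous fun t : ℝ =>
      c j * conj (c k) * (exp (I * j * t) * conj (exp (I * k * t))) := by
    fun_prop
  rw [← intervalIntegral.integral_ofReal, intervalIntegral.integral_congr fun t _ => hexpand t,
    intervalIntegral.integral_finsetSum fun j _ =>
      (continuous_finsetSum s fun k _ => hcont j k).intervalIntegrable _ _]
  push_cast
  rw [mul_sum]
  refine sum_congr rfl fun j hj => ?_
  rw [intervalIntegral.integral_finsetSum fun k _ => (hcont j k).intervalIntegrable _ _]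
  simp only [intervalIntegral.integral_const_mul, integral_exp_I_mul_mul_conj_exp_I_mul, mul_ite,
    mul_zero, sum_ite_eq, if_pos hj, mul_conj']
  ring

theorem sum_range_add_ite_mul_exp (N M : ℕ) (a b : ℕ → ℂ) (t : ℝ) :
    ∑ k ∈ range (N + M), (if k < N then a k else b (k - N)) * exp (I * k * t) =
      ∑ k ∈ range N, a k * exp (I * k * t) +
        exp (I * N * t) * ∑ k ∈ range M, b k * exp (I * k * t) := by
  rw [sum_range_add, mul_sum]
  congr 1
  · exact sum_congr rfl fun k hk => by rw [if_pos (mem_range.mp hk)]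
  · refine sum_congr rfl fun k _ => ?_
    rw [if_neg (by omega), Nat.add_sub_cancel_left, Nat.cast_add, mul_add, add_mul, exp_add]
    ring

theorem exists_RS_eq_sum_mul_exp (n : ℕ) : ∃ a b : ℕ → ℂ,
    (∀ k < 2 ^ n, (a k = 1 ∨ a k = -1) ∧ (b k = 1 ∨ b k = -1)) ∧
    ∀ t : ℝ, (RS n).1 t = ∑ k ∈ range (2 ^ n), a k * exp (I * k * t) ∧
      (RS n).2 t = ∑ k ∈ range (2 ^ n), b k * exp (I * k * t) := by
  induction n with
  | zero => exact ⟨fun _ => 1, fun _ => 1, by simp, fun t => by simp [RS]⟩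
  | succ n ih =>
    obtain ⟨a, b, hab, hPQ⟩ := ih
    refine ⟨fun k => if k < 2 ^ n then a k else b (k - 2 ^ n),
      fun k => if k < 2 ^ n then a k else -b (k - 2 ^ n), fun k hk => ?_, fun t => ?_⟩
    · by_cases h : k < 2 ^ n
      · simp only [if_pos h]
        exact ⟨(hab k h).1, (hab k h).1⟩
      · have hk' : k - 2 ^ n < 2 ^ n := by rw [pow_succ] at hk; omega
        simp only [if_neg h, neg_eq_iff_eq_neg, neg_neg]
        exact ⟨(hab _ hk').2, (hab _ hk').2.symm⟩
    · have hP := sum_range_add_ite_mul_exp (2 ^ n) (2 ^ n) a b t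
      have hQ := sum_range_add_ite_mul_exp (2 ^ n) (2 ^ n) a (fun j => -b j) t
      simp only [neg_mul, sum_neg_distrib, mul_neg, ← sub_eq_add_neg, Nat.cast_pow,
        Nat.cast_ofNat] at hP hQ
      rw [pow_succ, mul_two, hP, hQ, ← (hPQ t).1, ← (hPQ t).2]
      exact ⟨rfl, rfl⟩

theorem Real.sqrt_pow_eq_rpow {x : ℝ} (hx : 0 ≤ x) (m : ℕ) : √(x ^ m) = x ^ ((m : ℝ) / 2) := by
  rw [Real.sqrt_eq_rpow, ← Real.rpow_natCast, ← Real.rpow_mul hx]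
  ring_nf

/-- **Proposition 23.** For every `n`, the Rudin–Shapiro polynomial `P_n` has the form
`P_n(t) = Σ_{k=0}^{2ⁿ-1} a_k e^{ikt}` with `a_k ∈ {-1,1}`; consequently
`‖P_n‖_{L²(𝕋)} = 2^{n/2}` (w.r.t. normalized Lebesgue measure) and
`‖P_n‖_{C(𝕋)} ≤ 2^{(n+1)/2}`. -/
theorem rudinShapiro_props (n : ℕ) :
    (∃ a : ℕ → ℂ, (∀ k < 2 ^ n, a k = 1 ∨ a k = -1) ∧
      ∀ t : ℝ, RSP n t = ∑ k ∈ Finset.range (2 ^ n), a k * Complex.exp (Complex.I * k * t)) ∧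
    Real.sqrt ((2 * Real.pi)⁻¹ * ∫ t in (0 : ℝ)..(2 * Real.pi), ‖RSP n t‖ ^ 2)
      = (2 : ℝ) ^ ((n : ℝ) / 2) ∧
    ∀ t : ℝ, ‖RSP n t‖ ≤ (2 : ℝ) ^ (((n : ℝ) + 1) / 2) := by
  obtain ⟨a, b, hab, hPQ⟩ := exists_RS_eq_sum_mul_exp n
  have hP (t : ℝ) : RSP n t = ∑ k ∈ range (2 ^ n), a k * exp (I * k * t) := (hPQ t).1
  have hL2 : ∫ t in (0 : ℝ)..2 * π, ‖RSP n t‖ ^ 2 = 2 * π * 2 ^ n := by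
    have hunit : ∀ k ∈ range (2 ^ n), ‖a k‖ ^ 2 = 1 := fun k hk => by
      rcases (hab k (mem_range.mp hk)).1 with h | h <;> simp [h]
    simp_rw [hP, integral_norm_sq_sum_mul_exp, sum_congr rfl hunit, sum_const, card_range,
      nsmul_one, Nat.cast_pow, Nat.cast_ofNat]
  refine ⟨⟨a, fun k hk => (hab k hk).1, hP⟩, ?_, fun t => ?_⟩
  · rw [hL2, inv_mul_cancel_left₀ Real.two_pi_pos.ne', Real.sqrt_pow_eq_rpow zero_le_two]
  · have hsum := norm_sq_RS_fst_add_norm_sq_RS_snd n t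
    rw [← Nat.cast_add_one, ← Real.sqrt_pow_eq_rpow zero_le_two]
    exact Real.le_sqrt_of_sq_le (by unfold RSP; linarith [sq_nonneg ‖(RS n).2 t‖])
end
end

section
/- Let (r_k), (m_k), (n_k) be increasing sequences of positive integers and (ε_k) a decreasing sequence of positive reals tending to zero, with associated polynomials w_k(t) = ε_k P_{n_k}(m_k t) e^{i r_k t} + ε_k conj(P_{n_k}(m_k t)) e^{−i r_k t}. Assume r_k > 2·Σ_{j=1}^{k−1} ((2^{n_j} − 1)m_j + r_j) and m_k > 2·Σ_{j=1}^{k−1} ((2^{n_j} − 1)m_j + r_j) for all k ≥ 2, that ε_k·2^{(n_k + 3)/2} < 1 for all k, and that there is a constant c > 0 with ε_k²(2^{n_k + 1} − 1) > c for all k. Then the weak-star limit measure μ = Π_{k=1}^{∞} (1 − w_k) (the weak-star limit of the partial products f_N = Π_{k=1}^{N} (1 − w_k) in M(𝕋)) does not belong to L²(𝕋), i.e. μ is not absolutely continuous with a square-integrable density. -/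
open MeasureTheory Filter Complex Set AddCircle
open scoped Real ComplexConjugate

noncomputable section

/-- The polynomials `w_k(t) = ε_k P_{n_k}(m_k t) e^{i r_k t} + ε_k conj(P_{n_k}(m_k t)) e^{-i r_k t}`. -/
def wpoly (εs : ℕ → ℝ) (rs ms ns : ℕ → ℕ) (k : ℕ) (t : ℝ) : ℂ :=
  (εs k : ℂ) * RSP (ns k) (ms k * t) * Complex.exp (Complex.I * (rs k : ℂ) * t) +
    (εs k : ℂ) * conj (RSP (ns k) (ms k * t)) * Complex.exp (-(Complex.I * (rs k : ℂ) * t))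

/-- The partial products `f_N(t) = Π_{k=1}^N (1 - w_k(t))`. -/
def wprod (εs : ℕ → ℝ) (rs ms ns : ℕ → ℕ) (N : ℕ) (t : ℝ) : ℂ :=
  ∏ k ∈ Finset.Icc 1 N, (1 - wpoly εs rs ms ns k t)

/-- The set `{± Π_{k=1}^m ε_k^{l_k} : l_k ∈ {0,1}, m ∈ ℕ}`. -/
def coefSet (εs : ℕ → ℝ) : Set ℂ :=
  {z | ∃ (m : ℕ) (l : ℕ → ℕ), (∀ i, l i ≤ 1) ∧
    (z = ∏ i ∈ Finset.Icc 1 m, (εs i : ℂ) ^ l i ∨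
     z = -∏ i ∈ Finset.Icc 1 m, (εs i : ℂ) ^ l i)}


/-!
Suppose `μ = h · dx` with `h ∈ L²`. All frequencies of `w_{N+1}` lie in
`r_{N+1} ≤ |x| ≤ (2^{n_{N+1}} - 1) m_{N+1} + r_{N+1}`, while those of `f_N` satisfy
`|x| ≤ s_N := ∑_{k ≤ N} ((2^{n_k} - 1) m_k + r_k)`. Since `r_{N+1} > 2 s_N`, multiplying `f_N`
by `1 - w_{N+1}` leaves the coefficients at `|x| ≤ s_N` unchanged, and since moreover
`m_{N+1} > 2 s_N`, the coefficient at `r_{N+1} + j m_{N+1}` comes only from the constant term `1`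
of `f_N` and equals `-ε_{N+1}` times the `j`-th coefficient `±1` of `P_{n_{N+1}}`. These
coefficients are then frozen for all later `N`, so weak-star convergence hands them to `ĥ`: the
`k`-th block contributes `2^{n_k} ε_k² > c / 2` to `∑ |ĥ(n)|²`, contradicting Parseval.
-/

lemma integral_fourier_withDensity {T : ℝ} [Fact (0 < T)] {h : AddCircle T → ℝ}
    (h0 : ∀ x, 0 ≤ h x) (hm : AEMeasurable h haarAddCircle) (ν : ℤ) :
    ∫ x, fourier (-ν) x ∂(haarAddCircle.withDensity fun x => ENNReal.ofReal (h x)) =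
      fourierCoeff (fun x => (h x : ℂ)) ν := by
  rw [integral_withDensity_eq_integral_toReal_smul₀ hm.ennreal_ofReal
    (Eventually.of_forall fun _ => ENNReal.ofReal_lt_top), fourierCoeff]
  congr 1 with x
  rw [ENNReal.toReal_ofReal (h0 x), Complex.real_smul, smul_eq_mul, mul_comm]

open Function in
lemma not_memLp_two_of_disjoint_blocks {T : ℝ} [Fact (0 < T)] {f : AddCircle T → ℂ}
    (B : ℕ → Finset ℤ) (hB : Pairwise (Disjoint on B)) {δ : ℝ} (hδ : 0 < δ)
    (hblock : ∀ k, δ ≤ ∑ n ∈ B k, ‖fourierCoeff f n‖ ^ 2) :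
    ¬ MemLp f 2 haarAddCircle := by
  intro hf
  have hsum : Summable fun n => ‖fourierCoeff f n‖ ^ 2 := by
    simpa only [fourierCoeff_congr_ae hf.coeFn_toLp] using
      (hasSum_sq_fourierCoeff (hf.toLp f)).summable
  obtain ⟨M, hM⟩ := exists_nat_gt ((∑' n, ‖fourierCoeff f n‖ ^ 2) / δ)
  have hMδ : M * δ ≤ ∑' n, ‖fourierCoeff f n‖ ^ 2 :=
    calc (M : ℝ) * δ = ∑ k ∈ Finset.range M, δ := by simp
      _ ≤ ∑ k ∈ Finset.range M, ∑ n ∈ B k, ‖fourierCoeff f n‖ ^ 2 :=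
        Finset.sum_le_sum fun k _ => hblock k
      _ = ∑ n ∈ (Finset.range M).biUnion B, ‖fourierCoeff f n‖ ^ 2 :=
        (Finset.sum_biUnion (hB.set_pairwise _)).symm
      _ ≤ ∑' n, ‖fourierCoeff f n‖ ^ 2 := hsum.sum_le_tsum _ fun n _ => by positivity
  rw [div_lt_iff₀ hδ] at hM
  linarith

namespace RudinShapiro

def coeffs : ℕ → (ℕ → ℂ) × (ℕ → ℂ)
  | 0 => (fun j => if j = 0 then 1 else 0, fun j => if j = 0 then 1 else 0)
  | (n + 1) =>
      (fun j => if j < 2 ^ n then (coeffs n).1 j else (coeffs n).2 (j - 2 ^ n),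
       fun j => if j < 2 ^ n then (coeffs n).1 j else -(coeffs n).2 (j - 2 ^ n))

lemma coeffs_eq_one_or_neg_one (n : ℕ) : ∀ j < 2 ^ n,
    ((coeffs n).1 j = 1 ∨ (coeffs n).1 j = -1) ∧ ((coeffs n).2 j = 1 ∨ (coeffs n).2 j = -1) := by
  induction n with
  | zero => intro j hj; interval_cases j; simp [coeffs]
  | succ n ih =>
    intro j hj
    by_cases hlow : j < 2 ^ n
    · simpa only [coeffs, if_pos hlow, and_self] using (ih j hlow).1
    · have hQ := (ih (j - 2 ^ n) (by rw [pow_succ] at hj; omega)).2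
      simp only [coeffs, if_neg hlow, neg_eq_iff_eq_neg, neg_neg]
      exact ⟨hQ, hQ.symm⟩

lemma conj_coeffs {n j : ℕ} (hj : j < 2 ^ n) : conj ((coeffs n).1 j) = (coeffs n).1 j := by
  rcases (coeffs_eq_one_or_neg_one n j hj).1 with h | h <;> simp [h]

lemma RS_eq_sum (n : ℕ) (s : ℝ) :
    (RS n).1 s = ∑ j ∈ Finset.range (2 ^ n), (coeffs n).1 j * exp (I * j * s) ∧
    (RS n).2 s = ∑ j ∈ Finset.range (2 ^ n), (coeffs n).2 j * exp (I * j * s) := by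
  induction n with
  | zero => simp [RS, coeffs]
  | succ n ih =>
    have hshift : ∀ j : ℕ,
        exp (I * ((2 ^ n + j : ℕ) : ℂ) * s) = exp (I * 2 ^ n * s) * exp (I * j * s) := by
      intro j
      rw [← Complex.exp_add]
      push_cast
      ring_nf
    simp only [RS, coeffs, ih.1, ih.2, pow_succ, mul_two, Finset.sum_range_add, Finset.mul_sum,
      hshift, Nat.add_sub_cancel_left, sub_eq_add_neg]
    constructor <;> congr 1 <;>
      simp +contextual [← Finset.sum_neg_distrib, Finset.sum_congr, mul_left_comm]

lemma RSP_eq_sum (n : ℕ) (s : ℝ) :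
    RSP n s = ∑ j ∈ Finset.range (2 ^ n), (coeffs n).1 j * exp (I * j * s) :=
  (RS_eq_sum n s).1

lemma conj_RSP_eq_sum (n : ℕ) (s : ℝ) :
    conj (RSP n s) = ∑ j ∈ Finset.range (2 ^ n), (coeffs n).1 j * exp (-(I * j * s)) := by
  rw [RSP_eq_sum, map_sum]
  refine Finset.sum_congr rfl fun j hj => ?_
  rw [map_mul, conj_coeffs (Finset.mem_range.mp hj), ← Complex.exp_conj]
  simp

def fourierHom : Multiplicative ℤ →* C(Circ, ℂ) where
  toFun n := fourier n.toAdd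
  map_one' := by ext; simp
  map_mul' _ _ := by ext; exact fourier_add

def trigEval : AddMonoidAlgebra ℂ ℤ →ₐ[ℂ] C(Circ, ℂ) :=
  AddMonoidAlgebra.lift ℂ C(Circ, ℂ) ℤ fourierHom

lemma trigEval_single (a : ℤ) (b : ℂ) :
    trigEval (AddMonoidAlgebra.single a b) = b • fourier a :=
  AddMonoidAlgebra.lift_single _ _ _

lemma fourierCoeff_trigEval (c : AddMonoidAlgebra ℂ ℤ) : fourierCoeff (trigEval c) = c.coeff := by
  induction c using AddMonoidAlgebra.induction_linear with
  | zero => ext; simp [fourierCoeff]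
  | add p q hp hq =>
    have hint : ∀ F : C(Circ, ℂ), Integrable F haarAddCircle := fun F =>
      (map_continuous F).integrable_of_hasCompactSupport (.of_compactSpace _)
    rw [map_add, ContinuousMap.coe_add, fourierCoeff.add (hint _) (hint _), hp, hq]
    rfl
  | single a b =>
    ext n
    rw [trigEval_single, ContinuousMap.coe_smul, fourierCoeff.const_smul, fourierCoeff_fourier,
      AddMonoidAlgebra.coeff_single, Finsupp.single_apply, Pi.single_apply]
    simp [eq_comm]

lemma fourier_coe_apply_circ (n : ℤ) (t : ℝ) : fourier n (t : Circ) = exp (I * n * t) := by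
  rw [fourier_coe_apply]
  congr 1
  push_cast
  field_simp

lemma intervalIntegral_fourier_mul (F : C(Circ, ℂ)) (ν : ℤ) :
    (2 * π)⁻¹ • ∫ t in (0 : ℝ)..(2 * π), fourier (-ν) (t : Circ) * F t = fourierCoeff F ν := by
  rw [fourierCoeff_eq_intervalIntegral _ _ 0, zero_add, one_div]
  rfl

section Lacunary

variable (εs : ℕ → ℝ) (rs ms ns : ℕ → ℕ)

def freq (k j : ℕ) : ℤ := rs k + j * ms k

/-- The largest frequency of `w_k`; `spread N` bounds the frequencies of `f_N`. -/
def freqMax (k : ℕ) : ℕ := (2 ^ ns k - 1) * ms k + rs k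

def spread (N : ℕ) : ℕ := ∑ k ∈ Finset.Icc 1 N, freqMax rs ms ns k

def block (k : ℕ) : Finset ℤ := (Finset.range (2 ^ ns k)).image (freq rs ms k)

/-- `w_k` as a formal trigonometric polynomial in `ℂ[ℤ]`. -/
def wAlg (k : ℕ) : AddMonoidAlgebra ℂ ℤ :=
  ∑ j ∈ Finset.range (2 ^ ns k),
    (AddMonoidAlgebra.single (freq rs ms k j) ((εs k : ℂ) * (coeffs (ns k)).1 j) +
      AddMonoidAlgebra.single (-freq rs ms k j) ((εs k : ℂ) * (coeffs (ns k)).1 j))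

def wprodAlg (N : ℕ) : AddMonoidAlgebra ℂ ℤ := ∏ k ∈ Finset.Icc 1 N, (1 - wAlg εs rs ms ns k)

lemma trigEval_wAlg_apply (k : ℕ) (t : ℝ) :
    trigEval (wAlg εs rs ms ns k) t = wpoly εs rs ms ns k t := by
  rw [wpoly, conj_RSP_eq_sum, RSP_eq_sum]
  simp only [wAlg, map_sum, map_add, trigEval_single, ContinuousMap.coe_sum,
    ContinuousMap.add_apply, ContinuousMap.smul_apply, Finset.sum_apply, fourier_coe_apply_circ,
    smul_eq_mul, Finset.mul_sum, Finset.sum_mul, ← Finset.sum_add_distrib]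
  refine Finset.sum_congr rfl fun j _ => ?_
  simp only [freq, mul_assoc, ← Complex.exp_add]
  push_cast
  ring_nf

lemma trigEval_wprodAlg_apply (N : ℕ) (t : ℝ) :
    trigEval (wprodAlg εs rs ms ns N) t = wprod εs rs ms ns N t := by
  simp only [wprodAlg, wprod, map_prod, map_sub, map_one, ContinuousMap.coe_prod,
    Finset.prod_apply, ContinuousMap.sub_apply, ContinuousMap.one_apply, trigEval_wAlg_apply]

variable {rs ms ns}

lemma two_mul_spread_lt {a : ℕ → ℕ} (h1 : 0 < a 1)
    (hgap : ∀ k, 2 ≤ k →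
      2 * ∑ j ∈ Finset.Icc 1 (k - 1), ((2 ^ ns j - 1) * ms j + rs j) < a k) (N : ℕ) :
    2 * spread rs ms ns N < a (N + 1) := by
  cases N with
  | zero => simpa [spread] using h1
  | succ N => exact hgap (N + 2) (by omega)

lemma rs_le_freq (k j : ℕ) : (rs k : ℤ) ≤ freq rs ms k j := by
  unfold freq
  linarith [(by positivity : (0 : ℤ) ≤ j * ms k)]

lemma freq_le_freqMax {k j : ℕ} (hj : j < 2 ^ ns k) : freq rs ms k j ≤ freqMax rs ms ns k := by
  have : j * ms k ≤ (2 ^ ns k - 1) * ms k := Nat.mul_le_mul_right _ (by omega)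
  unfold freq freqMax
  push_cast
  omega

lemma freqMax_le_spread {k N : ℕ} (hk : 1 ≤ k) (hkN : k ≤ N) :
    freqMax rs ms ns k ≤ spread rs ms ns N :=
  Finset.single_le_sum (fun _ _ => Nat.zero_le _) (Finset.mem_Icc.mpr ⟨hk, hkN⟩)

lemma freq_sub_freq (k j j' : ℕ) :
    freq rs ms k j - freq rs ms k j' = ((j : ℤ) - j') * ms k := by
  unfold freq
  ring

lemma lt_abs_freq_sub_freq {S k j j' : ℕ} (hm : S < ms k) (hjj' : j ≠ j') :
    (S : ℤ) < |freq rs ms k j - freq rs ms k j'| := by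
  have hd : 1 ≤ |(j : ℤ) - j'| := Int.one_le_abs (sub_ne_zero.mpr (by exact_mod_cast hjj'))
  rw [freq_sub_freq, abs_mul, Nat.abs_cast]
  nlinarith

lemma freq_injective {k : ℕ} (hm : 0 < ms k) : Function.Injective (freq rs ms k) := by
  intro j j' h
  by_contra hjj'
  have := lt_abs_freq_sub_freq (rs := rs) (S := 0) hm hjj'
  rw [h, sub_self, abs_zero] at this
  exact this.false

lemma freq_lt_freq (hr : ∀ N, 2 * spread rs ms ns N < rs (N + 1)) {k k' j j' : ℕ} (hk : 1 ≤ k)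
    (hkk' : k < k') (hj : j < 2 ^ ns k) : freq rs ms k j < freq rs ms k' j' := by
  obtain ⟨K, rfl⟩ : ∃ K, k' = K + 1 := ⟨k' - 1, by omega⟩
  have hfk : freq rs ms k j ≤ freqMax rs ms ns k := freq_le_freqMax hj
  have hkK : freqMax rs ms ns k ≤ spread rs ms ns K := freqMax_le_spread hk (by omega)
  have := hr K
  have : (rs (K + 1) : ℤ) ≤ freq rs ms (K + 1) j' := rs_le_freq _ _
  omega

open Function in
lemma pairwise_disjoint_block (hr : ∀ N, 2 * spread rs ms ns N < rs (N + 1)) :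
    Pairwise (Disjoint on fun k => block rs ms ns (k + 1)) := by
  refine (pairwise_disjoint_on _).mpr fun a b hab => Finset.disjoint_left.mpr ?_
  simp only [block, Finset.mem_image, Finset.mem_range]
  rintro _ ⟨j, hj, rfl⟩ ⟨j', -, hjj'⟩
  exact (freq_lt_freq hr (by omega) (by omega) hj).ne' hjj'

lemma sum_sq_norm_block {k : ℕ} (hm : 0 < ms k) {a : ℤ → ℂ}
    (ha : ∀ j < 2 ^ ns k, a (freq rs ms k j) = -((εs k : ℂ) * (coeffs (ns k)).1 j)) :
    ∑ n ∈ block rs ms ns k, ‖a n‖ ^ 2 = 2 ^ ns k * εs k ^ 2 := by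
  rw [block, Finset.sum_image fun j _ j' _ h => freq_injective hm h]
  have hterm : ∀ j ∈ Finset.range (2 ^ ns k), ‖a (freq rs ms k j)‖ ^ 2 = εs k ^ 2 := by
    intro j hj
    rcases (coeffs_eq_one_or_neg_one _ j (Finset.mem_range.mp hj)).1 with h | h <;>
      simp [ha j (Finset.mem_range.mp hj), h]
  simp [Finset.sum_congr rfl hterm]

lemma coeff_mul_wAlg (F : AddMonoidAlgebra ℂ ℤ) (k : ℕ) (x : ℤ) :
    (F * wAlg εs rs ms ns k).coeff x = ∑ j ∈ Finset.range (2 ^ ns k),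
      (F.coeff (x - freq rs ms k j) + F.coeff (x + freq rs ms k j)) *
        ((εs k : ℂ) * (coeffs (ns k)).1 j) := by
  simp only [wAlg, Finset.mul_sum, AddMonoidAlgebra.coeff_sum, Finsupp.finsetSum_apply, mul_add,
    AddMonoidAlgebra.coeff_add, Finsupp.add_apply, AddMonoidAlgebra.coeff_mul_single_apply,
    ← sub_eq_add_neg, sub_neg_eq_add, add_mul]

lemma coeff_wprodAlg_succ (N : ℕ) (x : ℤ) :
    (wprodAlg εs rs ms ns (N + 1)).coeff x = (wprodAlg εs rs ms ns N).coeff x -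
      ∑ j ∈ Finset.range (2 ^ ns (N + 1)),
        ((wprodAlg εs rs ms ns N).coeff (x - freq rs ms (N + 1) j) +
          (wprodAlg εs rs ms ns N).coeff (x + freq rs ms (N + 1) j)) *
        ((εs (N + 1) : ℂ) * (coeffs (ns (N + 1))).1 j) := by
  rw [wprodAlg, Finset.prod_Icc_succ_top (by omega), mul_one_sub, AddMonoidAlgebra.coeff_sub,
    Finsupp.sub_apply, ← wprodAlg, coeff_mul_wAlg]

lemma coeff_wprodAlg_eq_zero {N : ℕ} {x : ℤ} (hx : (spread rs ms ns N : ℤ) < |x|) :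
    (wprodAlg εs rs ms ns N).coeff x = 0 := by
  induction N generalizing x with
  | zero =>
    rw [wprodAlg, Finset.Icc_eq_empty (by omega), Finset.prod_empty,
      AddMonoidAlgebra.one_def, AddMonoidAlgebra.coeff_single, Finsupp.single_eq_of_ne]
    simpa [spread, eq_comm] using hx
  | succ N ih =>
    have hS : spread rs ms ns (N + 1) = spread rs ms ns N + freqMax rs ms ns (N + 1) :=
      Finset.sum_Icc_succ_top (by omega) _
    rw [coeff_wprodAlg_succ, ih (by omega), zero_sub, neg_eq_zero]
    refine Finset.sum_eq_zero fun j hj => ?_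
    have hf : freq rs ms (N + 1) j ≤ freqMax rs ms ns (N + 1) :=
      freq_le_freqMax (Finset.mem_range.mp hj)
    have : (rs (N + 1) : ℤ) ≤ freq rs ms (N + 1) j := rs_le_freq _ _
    rw [ih, ih, add_zero, zero_mul] <;> simp only [lt_abs] at hx ⊢ <;> omega

lemma coeff_wprodAlg_succ_of_abs_le (hr : ∀ N, 2 * spread rs ms ns N < rs (N + 1)) {N : ℕ}
    {x : ℤ} (hx : |x| ≤ spread rs ms ns N) :
    (wprodAlg εs rs ms ns (N + 1)).coeff x = (wprodAlg εs rs ms ns N).coeff x := by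
  rw [coeff_wprodAlg_succ, sub_eq_self]
  refine Finset.sum_eq_zero fun j _ => ?_
  have : (rs (N + 1) : ℤ) ≤ freq rs ms (N + 1) j := rs_le_freq _ _
  have := hr N
  rw [coeff_wprodAlg_eq_zero, coeff_wprodAlg_eq_zero, add_zero, zero_mul] <;>
    simp only [lt_abs, abs_le] at hx ⊢ <;> omega

lemma coeff_wprodAlg_zero (hr : ∀ N, 2 * spread rs ms ns N < rs (N + 1)) (N : ℕ) :
    (wprodAlg εs rs ms ns N).coeff 0 = 1 := by
  induction N with
  | zero => simp [wprodAlg]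
  | succ N ih => rw [coeff_wprodAlg_succ_of_abs_le εs hr (by simp), ih]

lemma coeff_wprodAlg_succ_freq (hr : ∀ N, 2 * spread rs ms ns N < rs (N + 1))
    (hm : ∀ N, 2 * spread rs ms ns N < ms (N + 1)) (N : ℕ) {j : ℕ} (hj : j < 2 ^ ns (N + 1)) :
    (wprodAlg εs rs ms ns (N + 1)).coeff (freq rs ms (N + 1) j) =
      -((εs (N + 1) : ℂ) * (coeffs (ns (N + 1))).1 j) := by
  have hpos : ∀ j', (rs (N + 1) : ℤ) ≤ freq rs ms (N + 1) j' := rs_le_freq (N + 1)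
  have hrN := hr N
  have hmN := hm N
  have hfar : ∀ j', (spread rs ms ns N : ℤ) < |freq rs ms (N + 1) j + freq rs ms (N + 1) j'| :=
    fun j' => by have := hpos j; have := hpos j'; simp only [lt_abs]; omega
  -- only the term `j' = j` survives, through the constant coefficient `1` of `f_N`
  rw [coeff_wprodAlg_succ, coeff_wprodAlg_eq_zero _ (by have := hpos j; simp only [lt_abs]; omega),
    Finset.sum_eq_single_of_mem j (Finset.mem_range.mpr hj), sub_self,
    coeff_wprodAlg_zero εs hr, coeff_wprodAlg_eq_zero _ (hfar j)]
  · ring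
  · intro j' _ hjj'
    rw [coeff_wprodAlg_eq_zero _ (lt_abs_freq_sub_freq (by omega) hjj'.symm),
      coeff_wprodAlg_eq_zero _ (hfar j'), add_zero, zero_mul]

lemma coeff_wprodAlg_freq (hr : ∀ N, 2 * spread rs ms ns N < rs (N + 1))
    (hm : ∀ N, 2 * spread rs ms ns N < ms (N + 1)) {k N j : ℕ} (hk : 1 ≤ k) (hkN : k ≤ N)
    (hj : j < 2 ^ ns k) :
    (wprodAlg εs rs ms ns N).coeff (freq rs ms k j) = -((εs k : ℂ) * (coeffs (ns k)).1 j) := by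
  induction N, hkN using Nat.le_induction with
  | base =>
    obtain ⟨K, rfl⟩ : ∃ K, k = K + 1 := ⟨k - 1, by omega⟩
    exact coeff_wprodAlg_succ_freq εs hr hm K hj
  | succ N hkN ih =>
    have hf0 : 0 ≤ freq rs ms k j := le_trans (by positivity) (rs_le_freq k j)
    have hfk : freq rs ms k j ≤ freqMax rs ms ns k := freq_le_freqMax hj
    have hkN' : freqMax rs ms ns k ≤ spread rs ms ns N := freqMax_le_spread hk hkN
    rw [coeff_wprodAlg_succ_of_abs_le εs hr (by rw [abs_of_nonneg hf0]; omega), ih]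

end Lacunary

end RudinShapiro

theorem riesz_rudin_shapiro_not_L2_general (εs : ℕ → ℝ) (rs ms ns : ℕ → ℕ)
    (hrpos : ∀ k, 0 < rs k) (hmpos : ∀ k, 0 < ms k)
    (hgapr : ∀ k, 2 ≤ k →
      2 * ∑ j ∈ Finset.Icc 1 (k - 1), ((2 ^ ns j - 1) * ms j + rs j) < rs k)
    (hgapm : ∀ k, 2 ≤ k →
      2 * ∑ j ∈ Finset.Icc 1 (k - 1), ((2 ^ ns j - 1) * ms j + rs j) < ms k)
    (hbig : ∃ c : ℝ, 0 < c ∧ ∀ k, 1 ≤ k → c < εs k ^ 2 * ((2 : ℝ) ^ (ns k + 1) - 1))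
    (μ : Measure Circ)
    (hlim : ∀ g : C(Circ, ℂ),
      Tendsto (fun N => (2 * Real.pi)⁻¹ •
          ∫ t in (0 : ℝ)..(2 * Real.pi), g (t : ℝ) * wprod εs rs ms ns N t)
        atTop (nhds (∫ x, g x ∂μ))) :
    ¬ ∃ h : Circ → ℝ, (∀ x, 0 ≤ h x) ∧ MemLp h 2 (haarAddCircle : Measure Circ) ∧
        μ = (haarAddCircle : Measure Circ).withDensity fun x => ENNReal.ofReal (h x) := by
  rintro ⟨h, h0, hL2, rfl⟩
  obtain ⟨c, hc, hcbig⟩ := hbig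
  have hr := RudinShapiro.two_mul_spread_lt (hrpos 1) hgapr
  have hm := RudinShapiro.two_mul_spread_lt (hmpos 1) hgapm
  have hcoeff : ∀ k, 1 ≤ k → ∀ j < 2 ^ ns k,
      fourierCoeff (fun x => (h x : ℂ)) (RudinShapiro.freq rs ms k j) =
        -((εs k : ℂ) * (RudinShapiro.coeffs (ns k)).1 j) := by
    intro k hk j hj
    have hlimν := hlim (fourier (-RudinShapiro.freq rs ms k j))
    simp only [← RudinShapiro.trigEval_wprodAlg_apply, RudinShapiro.intervalIntegral_fourier_mul,
      RudinShapiro.fourierCoeff_trigEval,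
      integral_fourier_withDensity h0 hL2.aestronglyMeasurable.aemeasurable] at hlimν
    refine tendsto_nhds_unique hlimν (tendsto_const_nhds.congr' ?_)
    filter_upwards [eventually_ge_atTop k] with N hN
    exact (RudinShapiro.coeff_wprodAlg_freq εs hr hm hk hN hj).symm
  refine not_memLp_two_of_disjoint_blocks (f := fun x => (h x : ℂ)) _
    (RudinShapiro.pairwise_disjoint_block hr) (half_pos hc) (fun k => ?_) hL2.ofReal
  rw [RudinShapiro.sum_sq_norm_block εs (by have := hm k; omega) (hcoeff (k + 1) (by omega))]
  have hck := hcbig (k + 1) (by omega)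
  rw [pow_succ (2 : ℝ) (ns (k + 1))] at hck
  nlinarith [sq_nonneg (εs (k + 1))]

/-- **Proposition 28.** Under the lacunarity conditions on `(r_k)` and `(m_k)`, the bound
`ε_k 2^{(n_k+3)/2} < 1`, and `ε_k²(2^{n_k+1} - 1) > c > 0`, the weak-star limit measure
`μ = Π_{k=1}^∞ (1 - w_k)` of the partial products does not belong to `L²(𝕋)`. -/
theorem riesz_rudin_shapiro_not_L2 (εs : ℕ → ℝ) (rs ms ns : ℕ → ℕ)
    (hr : StrictMono rs) (hm : StrictMono ms) (hn : StrictMono ns)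
    (hrpos : ∀ k, 0 < rs k) (hmpos : ∀ k, 0 < ms k) (hnpos : ∀ k, 0 < ns k)
    (hεanti : StrictAnti εs) (hεpos : ∀ k, 0 < εs k)
    (hεlim : Tendsto εs atTop (nhds 0))
    (hgapr : ∀ k, 2 ≤ k →
      2 * ∑ j ∈ Finset.Icc 1 (k - 1), ((2 ^ ns j - 1) * ms j + rs j) < rs k)
    (hgapm : ∀ k, 2 ≤ k →
      2 * ∑ j ∈ Finset.Icc 1 (k - 1), ((2 ^ ns j - 1) * ms j + rs j) < ms k)
    (hsmall : ∀ k, 1 ≤ k → εs k * (2 : ℝ) ^ (((ns k : ℝ) + 3) / 2) < 1)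
    (hbig : ∃ c : ℝ, 0 < c ∧ ∀ k, 1 ≤ k → c < εs k ^ 2 * ((2 : ℝ) ^ (ns k + 1) - 1))
    (μ : Measure Circ) (hfin : IsFiniteMeasure μ)
    (hlim : ∀ g : C(Circ, ℂ),
      Tendsto (fun N => (2 * Real.pi)⁻¹ •
          ∫ t in (0 : ℝ)..(2 * Real.pi), g (t : ℝ) * wprod εs rs ms ns N t)
        atTop (nhds (∫ x, g x ∂μ))) :
    ¬ ∃ h : Circ → ℝ, (∀ x, 0 ≤ h x) ∧ MemLp h 2 (haarAddCircle : Measure Circ) ∧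
        μ = (haarAddCircle : Measure Circ).withDensity fun x => ENNReal.ofReal (h x) :=
  riesz_rudin_shapiro_not_L2_general εs rs ms ns hrpos hmpos hgapr hgapm hbig μ hlim
end
end
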